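/- arXiv:1509.02612 — 14 statements merged into one kernel-verified Lean document; each statement's English description precedes it below -/
import Mathlib

section
/- Let R be a connected commutative ring and let f ∈ R[X] be a polynomial that is separable over R. Then f ≠ 0 and the set {r ∈ R : f(r) = 0} is finite of cardinality at most the degree of f. -/
/-!
A root `a` of a separable `f` splits off as `f = (X - a) g` with `g` separable and `X - a`, `g`
coprime. At any other root `b`, the elements `b - a` and `g(b)` are then coprime with product
`f(b) = 0`; in a connected ring this forces one of them to vanish, since `u (b - a)` is idempotent
whenever `u (b - a) + v g(b) = 1`. So every root of `f` other than `a` is a root of `g`, and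
induction on the degree bounds the number of roots.
-/

open Polynomial

section

variable {R : Type*} [CommRing R]

theorem IsCoprime.eq_zero_or_eq_zero_of_mul_eq_zero
    (hconn : ∀ e : R, IsIdempotentElem e → e = 0 ∨ e = 1) {x y : R}
    (hcop : IsCoprime x y) (hxy : x * y = 0) : x = 0 ∨ y = 0 := by
  obtain ⟨u, v, huv⟩ := hcop
  have hidem : IsIdempotentElem (u * x) := by
    unfold IsIdempotentElem
    linear_combination (u * x) * huv - u * v * hxy
  rcases hconn _ hidem with h0 | h1
  · left
    linear_combination -x * huv + x * h0 + v * hxy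
  · right
    linear_combination -y * h1 + u * hxy

theorem Polynomial.setOf_eval_eq_zero_subset_insert
    (hconn : ∀ e : R, IsIdempotentElem e → e = 0 ∨ e = 1) {a : R} {g : R[X]}
    (hsep : ((X - C a) * g).Separable) :
    {r | ((X - C a) * g).eval r = 0} ⊆ insert a {r | g.eval r = 0} := by
  intro b hb
  have hcop : IsCoprime (b - a) (g.eval b) := by
    simpa using hsep.isCoprime.map (evalRingHom b)
  have hmul : (b - a) * g.eval b = 0 := by simpa using hb
  rcases hcop.eq_zero_or_eq_zero_of_mul_eq_zero hconn hmul with h | h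
  · exact .inl (sub_eq_zero.mp h)
  · exact .inr h

theorem Polynomial.Separable.encard_setOf_eval_eq_zero_le_natDegree [Nontrivial R]
    (hconn : ∀ e : R, IsIdempotentElem e → e = 0 ∨ e = 1) {f : R[X]} (hf : f.Separable) :
    {r | f.eval r = 0}.encard ≤ f.natDegree := by
  obtain hempty | ⟨a, ha⟩ := Set.eq_empty_or_nonempty {r | f.eval r = 0}
  · simp [hempty]
  obtain ⟨g, rfl⟩ := dvd_iff_isRoot.mpr ha
  have hg : g.Separable := hf.of_mul_right
  have hdeg : ((X - C a) * g).natDegree = g.natDegree + 1 := by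
    rw [(monic_X_sub_C a).natDegree_mul' hg.ne_zero, natDegree_X_sub_C, add_comm]
  have ih := hg.encard_setOf_eval_eq_zero_le_natDegree hconn
  calc _ ≤ (insert a {r | g.eval r = 0}).encard :=
        Set.encard_le_encard (setOf_eval_eq_zero_subset_insert hconn hf)
    _ ≤ {r | g.eval r = 0}.encard + 1 := Set.encard_insert_le _ _
    _ ≤ g.natDegree + 1 := by gcongr
    _ = _ := by rw [hdeg]; push_cast; rfl
termination_by f.natDegree
decreasing_by subst_vars; omega

end

/-- Theorem 1.5 (Theorem `degbdintrothm`): if `R` is a connected commutative ring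
(its only idempotents are `0` and `1`, and `R` is nontrivial) and `f ∈ R[X]` is
separable over `R`, then `f ≠ 0` and the set of roots of `f` in `R` is finite
of cardinality at most `deg f`. -/
theorem stmt_0 {R : Type*} [CommRing R] [Nontrivial R]
    (hconn : ∀ e : R, IsIdempotentElem e → e = 0 ∨ e = 1)
    (f : Polynomial R) (hf : f.Separable) :
    f ≠ 0 ∧ {r : R | f.eval r = 0}.Finite ∧
      {r : R | f.eval r = 0}.ncard ≤ f.natDegree :=
  ⟨hf.ne_zero, Set.encard_le_coe_iff_finite_ncard_le.mp
    (hf.encard_setOf_eval_eq_zero_le_natDegree hconn)⟩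
end

section
/- Let R be a connected commutative ring and let f ∈ R[X] be separable over R. If r, s ∈ R satisfy f(r) = 0 and f(s) = 0, then r − s is either 0 or a unit of R. -/
/-- Proposition `degbd`(a): in a connected commutative ring `R`, if `f ∈ R[X]`
is separable over `R` and `r, s` are roots of `f`, then `r - s` is zero or a unit. -/
theorem stmt_1 {R : Type*} [CommRing R] [Nontrivial R]
    (hconn : ∀ e : R, IsIdempotentElem e → e = 0 ∨ e = 1)
    (f : Polynomial R) (hf : f.Separable)
    (r s : R) (hr : f.eval r = 0) (hs : f.eval s = 0) :
    r - s = 0 ∨ IsUnit (r - s) := by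
  classical
  -- factor f = (X - C r) * g
  obtain ⟨g, hg⟩ := (Polynomial.dvd_iff_isRoot.mpr hr)
  -- f'(r) = g(r)
  have hderiv : (Polynomial.derivative f).eval r = g.eval r := by
    simp [hg, Polynomial.derivative_mul]
  -- g(r) is a unit
  obtain ⟨a, b, hab⟩ := hf
  have hab' := congrArg (Polynomial.eval r) hab
  simp [hr, hderiv] at hab'
  have hu : IsUnit (g.eval r) := IsUnit.of_mul_eq_one _ (mul_comm (Polynomial.eval r b) _ ▸ hab')
  -- f(s) = (s - r) * g(s) = 0
  have hfs : (s - r) * g.eval s = 0 := by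
    have h2 := hs
    rw [hg] at h2
    simpa using h2
  -- s - r ∣ g(s) - g(r)
  obtain ⟨h, hh⟩ := Polynomial.sub_dvd_eval_sub s r g
  set d := s - r with hd
  set u := g.eval r with hu'
  have key : d * u + d * d * h = 0 := by
    have hgs : g.eval s = u + d * h := by linear_combination hh
    calc d * u + d * d * h = d * (u + d * h) := by ring
    _ = d * g.eval s := by rw [hgs]
    _ = 0 := hfs
  obtain ⟨v, hv⟩ := hu.exists_right_inv
  -- idempotent t = -d*h*v
  have hidem : IsIdempotentElem (-(d * h * v)) := by
    have hdud : d * u = -(d * d * h) := by linear_combination key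
    unfold IsIdempotentElem
    calc (-(d * h * v)) * (-(d * h * v)) = (d * d * h) * h * v * v := by ring
    _ = -(d * u) * h * v * v := by rw [hdud]; ring
    _ = -(d * h * v) * (u * v) := by ring
    _ = -(d * h * v) := by rw [hv, mul_one]
  rcases hconn _ hidem with h0 | h1
  · left
    have hdud : d * u = -(d * d * h) := by linear_combination key
    have hd0 : d = 0 := by
      calc d = d * (u * v) := by rw [hv, mul_one]
      _ = -(d * d * h) * v := by rw [← mul_assoc, hdud]
      _ = d * -(d * h * v) := by ring
      _ = 0 := by rw [h0, mul_zero]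
    rw [hd] at hd0
    linear_combination -hd0
  · right
    have : (r - s) * (h * v) = 1 := by
      have : -(d * h * v) = 1 := h1
      rw [hd] at this
      linear_combination this
    exact IsUnit.of_mul_eq_one _ this
end

section
/- Let R be a connected commutative ring, let f ∈ R[X] be separable over R, let S be a nontrivial commutative ring, and let φ : R → S be a ring homomorphism. Then φ is injective on the set of roots of f: if r, s ∈ R satisfy f(r) = f(s) = 0 and φ(r) = φ(s), then r = s. -/
/-!
Write `d = r - s`. Taylor expansion of `f` at `s` gives `0 = f'(s) d + k d²`, and `f'(s)` is a unit
because `f` and `f'` are coprime and `f(s) = 0`; hence `d = d² m` for some `m`. Then `d m` is an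
idempotent, so it is `0` (forcing `d = 0`) or `1` (making `d` a unit, impossible since `φ d = 0`
in the nontrivial ring `S`).
-/

theorem eq_zero_or_isUnit_of_eq_sq_mul {M : Type*} [CommMonoidWithZero M]
    (hconn : ∀ e : M, IsIdempotentElem e → e = 0 ∨ e = 1) {d m : M} (h : d = d ^ 2 * m) :
    d = 0 ∨ IsUnit d := by
  have hidem : IsIdempotentElem (d * m) := by
    calc d * m * (d * m) = d ^ 2 * m * m := by rw [sq, mul_mul_mul_comm, ← mul_assoc]
      _ = d * m := by rw [← h]
  rcases hconn _ hidem with h0 | h1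
  · left
    calc d = d ^ 2 * m := h
      _ = d * (d * m) := by rw [sq, mul_assoc]
      _ = 0 := by rw [h0, mul_zero]
  · exact .inr (IsUnit.of_mul_eq_one m h1)

namespace Polynomial

variable {R : Type*} [CommRing R] {f : R[X]} {r s : R}

theorem Separable.isUnit_derivative_eval (hf : f.Separable) (hs : f.IsRoot s) :
    IsUnit (f.derivative.eval s) := by
  obtain ⟨a, b, hab⟩ := hf
  refine IsUnit.of_mul_eq_one_right (b.eval s) ?_
  simpa [hs.eq_zero] using congrArg (eval s) hab

theorem Separable.exists_sub_eq_sq_mul (hf : f.Separable) (hr : f.IsRoot r) (hs : f.IsRoot s) :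
    ∃ m, r - s = (r - s) ^ 2 * m := by
  obtain ⟨u, hu⟩ := hf.isUnit_derivative_eval hs
  obtain ⟨k, hk⟩ := f.binomExpansion s (r - s)
  rw [add_sub_cancel, hr.eq_zero, hs.eq_zero, ← hu] at hk
  refine ⟨-(k * ↑u⁻¹), ?_⟩
  linear_combination -(↑u⁻¹ : R) * hk - (r - s) * u.inv_mul

end Polynomial

theorem stmt_2_general {R S : Type*} [CommRing R] [CommRing S] [Nontrivial S]
    (hconn : ∀ e : R, IsIdempotentElem e → e = 0 ∨ e = 1)
    (f : Polynomial R) (hf : f.Separable) (φ : R →+* S)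
    (r s : R) (hr : f.eval r = 0) (hs : f.eval s = 0) (hφ : φ r = φ s) :
    r = s := by
  obtain ⟨m, hm⟩ := hf.exists_sub_eq_sq_mul hr hs
  rcases eq_zero_or_isUnit_of_eq_sq_mul hconn hm with hzero | hunit
  · exact sub_eq_zero.mp hzero
  · have hφd : φ (r - s) = 0 := by rw [map_sub, hφ, sub_self]
    exact absurd (hφd ▸ hunit.map φ) not_isUnit_zero

/-- Proposition `degbd`(b): in a connected commutative ring `R`, if `f ∈ R[X]`
is separable over `R`, `S` is a nontrivial commutative ring, and `φ : R → S` is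
a ring homomorphism, then `φ` is injective on the set of roots of `f`. -/
theorem stmt_2 {R S : Type*} [CommRing R] [Nontrivial R] [CommRing S] [Nontrivial S]
    (hconn : ∀ e : R, IsIdempotentElem e → e = 0 ∨ e = 1)
    (f : Polynomial R) (hf : f.Separable) (φ : R →+* S)
    (r s : R) (hr : f.eval r = 0) (hs : f.eval s = 0) (hφ : φ r = φ s) :
    r = s :=
  stmt_2_general hconn f hf φ r s hr hs hφ
end

section
/- Let R be a commutative ring, let 𝒮 be a finite set of ideals of R, each different from R, with ⋂_{𝔞 ∈ 𝒮} 𝔞 = {0}. Let ε : 𝒮 → R be a family with ε(𝔞) ∈ {0, 1} for every 𝔞 ∈ 𝒮. Then there exists x ∈ R with x − ε(𝔞) ∈ 𝔞 for all 𝔞 ∈ 𝒮 if and only if ε(𝔞) = ε(𝔟) for all 𝔞, 𝔟 ∈ 𝒮 with 𝔞 + 𝔟 ≠ R. -/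
/-! Reducing modulo the ideals with `ε = 0` and with `ε = 1` separately, such an `x` is exactly a
solution of a two-piece Chinese remainder problem, which is solvable iff every ideal of the first
kind is comaximal with every ideal of the second. Conversely `x ∈ 𝔞` and `x - 1 ∈ 𝔟` force
`1 = x - (x - 1) ∈ 𝔞 + 𝔟`. -/

namespace Ideal

variable {R : Type*} [CommRing R]

theorem sup_eq_top_of_mem_of_sub_one_mem {I J : Ideal R} {x : R} (hx : x ∈ I) (hx' : x - 1 ∈ J) :
    I ⊔ J = ⊤ := by
  rw [eq_top_iff_one, show (1 : R) = x - (x - 1) by ring]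
  exact sub_mem (mem_sup_left hx) (mem_sup_right hx')

theorem exists_forall_mem_and_forall_sub_one_mem {ι κ : Type*} (s : Finset ι) (t : Finset κ)
    (I : ι → Ideal R) (J : κ → Ideal R) (h : ∀ i ∈ s, ∀ j ∈ t, I i ⊔ J j = ⊤) :
    ∃ x : R, (∀ i ∈ s, x ∈ I i) ∧ ∀ j ∈ t, x - 1 ∈ J j := by
  have hsup : (⨅ i ∈ s, I i) ⊔ ⨅ j ∈ t, J j = ⊤ :=
    iInf_sup_eq_top fun i hi => sup_iInf_eq_top fun j hj => h i hi j hj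
  obtain ⟨a, ha, b, hb, hab⟩ := Submodule.mem_sup.mp ((eq_top_iff_one _).mp hsup)
  simp only [Submodule.mem_iInf] at ha hb
  refine ⟨a, ha, fun j hj => ?_⟩
  rw [show a - 1 = -b by linear_combination hab]
  exact neg_mem (hb j hj)

end Ideal

theorem stmt_4_general {R : Type*} [CommRing R] (𝒮 : Finset (Ideal R))
    (ε : Ideal R → R) (hε : ∀ 𝔞 ∈ 𝒮, ε 𝔞 = 0 ∨ ε 𝔞 = 1) :
    (∃ x : R, ∀ 𝔞 ∈ 𝒮, x - ε 𝔞 ∈ 𝔞) ↔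
      (∀ 𝔞 ∈ 𝒮, ∀ 𝔟 ∈ 𝒮, 𝔞 + 𝔟 ≠ ⊤ → ε 𝔞 = ε 𝔟) := by
  constructor
  · rintro ⟨x, hx⟩ 𝔞 h𝔞 𝔟 h𝔟 hne
    have comax : ∀ 𝔠 ∈ 𝒮, ∀ 𝔡 ∈ 𝒮, ε 𝔠 = 0 → ε 𝔡 = 1 → 𝔠 ⊔ 𝔡 = ⊤ :=
      fun 𝔠 h𝔠 𝔡 h𝔡 h0 h1 => Ideal.sup_eq_top_of_mem_of_sub_one_mem
        (by simpa [h0] using hx 𝔠 h𝔠) (by simpa [h1] using hx 𝔡 h𝔡)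
    rcases hε 𝔞 h𝔞 with h𝔞0 | h𝔞1 <;> rcases hε 𝔟 h𝔟 with h𝔟0 | h𝔟1
    · rw [h𝔞0, h𝔟0]
    · exact absurd (comax 𝔞 h𝔞 𝔟 h𝔟 h𝔞0 h𝔟1) hne
    · exact absurd ((sup_comm 𝔞 𝔟).trans (comax 𝔟 h𝔟 𝔞 h𝔞 h𝔟0 h𝔞1)) hne
    · rw [h𝔞1, h𝔟1]
  · classical
    intro h
    -- If `𝔞 + 𝔟 ≠ ⊤` then `0 = 1` in `R`, so `1 = 0 ∈ 𝔞 + 𝔟` after all.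
    have comax : ∀ 𝔞 ∈ 𝒮.filter (ε · = 0), ∀ 𝔟 ∈ 𝒮.filter (ε · = 1), 𝔞 ⊔ 𝔟 = ⊤ := by
      intro 𝔞 h𝔞 𝔟 h𝔟
      rw [Finset.mem_filter] at h𝔞 h𝔟
      by_contra hne
      have h01 : (0 : R) = 1 := h𝔞.2 ▸ h𝔟.2 ▸ h 𝔞 h𝔞.1 𝔟 h𝔟.1 hne
      exact hne ((Ideal.eq_top_iff_one _).mpr (h01 ▸ zero_mem _))
    obtain ⟨x, hx0, hx1⟩ := Ideal.exists_forall_mem_and_forall_sub_one_mem _ _ id id comax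
    refine ⟨x, fun 𝔞 h𝔞 => ?_⟩
    rcases hε 𝔞 h𝔞 with h0 | h1
    · simpa [h0] using hx0 𝔞 (Finset.mem_filter.mpr ⟨h𝔞, h0⟩)
    · simpa [h1] using hx1 𝔞 (Finset.mem_filter.mpr ⟨h𝔞, h1⟩)

/-- Lemma `idempotClem`: let `𝒮` be a finite set of proper ideals of a commutative
ring `R` with intersection `{0}`, and `ε : 𝒮 → R` a family of elements of `{0,1}`.
There exists `x ∈ R` with `x ≡ ε(𝔞) mod 𝔞` for all `𝔞 ∈ 𝒮` if and only if
`ε(𝔞) = ε(𝔟)` whenever `𝔞 + 𝔟 ≠ R`. -/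
theorem stmt_4 {R : Type*} [CommRing R] (𝒮 : Finset (Ideal R))
    (hproper : ∀ 𝔞 ∈ 𝒮, 𝔞 ≠ ⊤)
    (hinter : (⨅ 𝔞 ∈ 𝒮, 𝔞 : Ideal R) = ⊥)
    (ε : Ideal R → R) (hε : ∀ 𝔞 ∈ 𝒮, ε 𝔞 = 0 ∨ ε 𝔞 = 1) :
    (∃ x : R, ∀ 𝔞 ∈ 𝒮, x - ε 𝔞 ∈ 𝔞) ↔
      (∀ 𝔞 ∈ 𝒮, ∀ 𝔟 ∈ 𝒮, 𝔞 + 𝔟 ≠ ⊤ → ε 𝔞 = ε 𝔟) :=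
  stmt_4_general 𝒮 ε hε
end

section
/- Let R be a commutative ring, let 𝒮 be a finite set of ideals of R, each different from R, with ⋂_{𝔞 ∈ 𝒮} 𝔞 = {0}. Define a relation on 𝒮 by letting 𝔞 and 𝔟 be adjacent if 𝔞 ≠ 𝔟 and 𝔞 + 𝔟 ≠ R. Let ε : 𝒮 → R be a family with ε(𝔞) ∈ {0, 1} for every 𝔞 ∈ 𝒮. Then there exists x ∈ R with x − ε(𝔞) ∈ 𝔞 for all 𝔞 ∈ 𝒮 if and only if ε(𝔞) = ε(𝔟) whenever 𝔞 and 𝔟 are related under the reflexive-transitive closure of the adjacency relation (i.e., lie in the same connected component of the associated graph). -/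
/-!
If `x ≡ ε 𝔞 (mod 𝔞)` for all `𝔞`, then for adjacent `𝔞, 𝔟` the difference `ε 𝔞 - ε 𝔟`
lies in the proper ideal `𝔞 + 𝔟`; being `0` or a unit `±1`, it is `0`, so `ε` is constant
along edges and hence on components. Conversely, if `ε` is constant on components, every
ideal of `𝒮₀ = {ε = 0}` is comaximal with every ideal of `𝒮₁ = {ε = 1}`, so the intersections
`⋂ 𝒮₀` and `⋂ 𝒮₁` are comaximal too; writing `1 = a + b` with `a ∈ ⋂ 𝒮₀`, `b ∈ ⋂ 𝒮₁`,
the element `x = a` is the required solution.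
-/

namespace Ideal

variable {R : Type*} [CommRing R]

theorem eq_of_sub_mem_of_sub_mem_of_sup_ne_top {I J : Ideal R} {x e f : R}
    (hI : x - e ∈ I) (hJ : x - f ∈ J) (he : e = 0 ∨ e = 1) (hf : f = 0 ∨ f = 1)
    (hIJ : I ⊔ J ≠ ⊤) : e = f := by
  have hmem : e - f ∈ I ⊔ J := by
    rw [show e - f = (x - f) - (x - e) by ring]
    exact sub_mem (mem_sup_right hJ) (mem_sup_left hI)
  by_contra hne
  refine hIJ (eq_top_of_isUnit_mem _ hmem ?_)
  rcases he with rfl | rfl <;> rcases hf with rfl | rfl <;> simp_all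

theorem exists_mem_and_sub_one_mem_of_sup_eq_top {ι : Type*} {s₀ s₁ : Finset ι}
    {I : ι → Ideal R} (h : ∀ i ∈ s₀, ∀ j ∈ s₁, I i ⊔ I j = ⊤) :
    ∃ x : R, (∀ i ∈ s₀, x ∈ I i) ∧ ∀ j ∈ s₁, x - 1 ∈ I j := by
  have hsup : (⨅ i ∈ s₀, I i) ⊔ (⨅ j ∈ s₁, I j) = ⊤ :=
    sup_iInf_eq_top fun j hj ↦ iInf_sup_eq_top fun i hi ↦ h i hi j hj
  obtain ⟨a, ha, b, hb, hab⟩ := Submodule.mem_sup.mp ((eq_top_iff_one _).mp hsup)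
  refine ⟨a, fun i hi ↦ (mem_iInf.mp ha i |> mem_iInf.mp) hi, fun j hj ↦ ?_⟩
  rw [show a - 1 = -b by linear_combination hab]
  exact neg_mem ((mem_iInf.mp hb j |> mem_iInf.mp) hj)

end Ideal

theorem Relation.ReflTransGen.eq_of_forall_eq {α β : Type*} {r : α → α → Prop} {f : α → β}
    (h : ∀ a b, r a b → f a = f b) {a b : α} (hab : ReflTransGen r a b) : f a = f b := by
  induction hab with
  | refl => rfl
  | tail _ hbc ih => exact ih.trans (h _ _ hbc)

theorem stmt_5_general {R : Type*} [CommRing R] (𝒮 : Finset (Ideal R))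
    (ε : Ideal R → R) (hε : ∀ 𝔞 ∈ 𝒮, ε 𝔞 = 0 ∨ ε 𝔞 = 1) :
    (∃ x : R, ∀ 𝔞 ∈ 𝒮, x - ε 𝔞 ∈ 𝔞) ↔
      (∀ 𝔞 ∈ 𝒮, ∀ 𝔟 ∈ 𝒮,
        Relation.ReflTransGen
          (fun I J : Ideal R => I ∈ 𝒮 ∧ J ∈ 𝒮 ∧ I ≠ J ∧ I + J ≠ ⊤) 𝔞 𝔟 →
        ε 𝔞 = ε 𝔟) := by
  classical
  constructor
  · rintro ⟨x, hx⟩ 𝔞 - 𝔟 - h𝔞𝔟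
    refine h𝔞𝔟.eq_of_forall_eq fun I J ⟨hI, hJ, _, hIJ⟩ ↦ ?_
    exact Ideal.eq_of_sub_mem_of_sub_mem_of_sup_ne_top (hx I hI) (hx J hJ) (hε I hI) (hε J hJ) hIJ
  · intro hconst
    have hcomax : ∀ 𝔞 ∈ 𝒮.filter (ε · ≠ 1), ∀ 𝔟 ∈ 𝒮.filter (ε · = 1), 𝔞 ⊔ 𝔟 = ⊤ := by
      simp only [Finset.mem_filter]
      rintro 𝔞 ⟨h𝔞, h𝔞0⟩ 𝔟 ⟨h𝔟, h𝔟1⟩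
      by_contra htop
      have hne : 𝔞 ≠ 𝔟 := by rintro rfl; exact h𝔞0 h𝔟1
      exact h𝔞0 (h𝔟1 ▸ hconst 𝔞 h𝔞 𝔟 h𝔟 (.single ⟨h𝔞, h𝔟, hne, htop⟩))
    obtain ⟨x, hx0, hx1⟩ := Ideal.exists_mem_and_sub_one_mem_of_sup_eq_top (I := id) hcomax
    refine ⟨x, fun 𝔞 h𝔞 ↦ ?_⟩
    by_cases h1 : ε 𝔞 = 1
    · exact h1 ▸ hx1 𝔞 (Finset.mem_filter.mpr ⟨h𝔞, h1⟩)
    · rw [(hε 𝔞 h𝔞).resolve_right h1, sub_zero]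
      exact hx0 𝔞 (Finset.mem_filter.mpr ⟨h𝔞, h1⟩)

/-- Graph version of Lemma `idempotClem` (cf. Proposition `bijgraphprop`(i)): with
`𝒮` a finite set of proper ideals of `R` intersecting in `{0}` and `ε` a `{0,1}`-valued
family, an element `x` with `x ≡ ε(𝔞) mod 𝔞` for all `𝔞 ∈ 𝒮` exists if and only if `ε`
is constant on connected components of the graph on `𝒮` joining distinct `𝔞, 𝔟`
when `𝔞 + 𝔟 ≠ R`. -/
theorem stmt_5 {R : Type*} [CommRing R] (𝒮 : Finset (Ideal R))
    (hproper : ∀ 𝔞 ∈ 𝒮, 𝔞 ≠ ⊤)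
    (hinter : (⨅ 𝔞 ∈ 𝒮, 𝔞 : Ideal R) = ⊥)
    (ε : Ideal R → R) (hε : ∀ 𝔞 ∈ 𝒮, ε 𝔞 = 0 ∨ ε 𝔞 = 1) :
    (∃ x : R, ∀ 𝔞 ∈ 𝒮, x - ε 𝔞 ∈ 𝔞) ↔
      (∀ 𝔞 ∈ 𝒮, ∀ 𝔟 ∈ 𝒮,
        Relation.ReflTransGen
          (fun I J : Ideal R => I ∈ 𝒮 ∧ J ∈ 𝒮 ∧ I ≠ J ∧ I + J ≠ ⊤) 𝔞 𝔟 →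
        ε 𝔞 = ε 𝔟) :=
  stmt_5_general 𝒮 ε hε
end

section
/- Let E be a commutative ℚ-algebra that is finite-dimensional as a ℚ-vector space, let p be a prime number, and let k be a positive integer. If the unit group of E contains an element of multiplicative order p^k, then φ(p^k) ≤ dim_ℚ E, where φ is Euler's totient function. -/
open Polynomial

/-- Since `X ^ p ^ (n + 1) - 1 = Φ_{p ^ (n + 1)} * (X ^ p ^ n - 1)`, a minimal polynomial of `ζ`
coprime to the irreducible factor `Φ_{p ^ (n + 1)}` would divide `X ^ p ^ n - 1`, contradicting
primitivity. This fails for orders that are not prime powers, e.g. `(-1, ω) ∈ ℚ × ℚ(ω)`. -/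
theorem cyclotomic_prime_pow_dvd_minpoly {K E : Type*} [Field K] [CommRing E] [Algebra K E]
    {p n : ℕ} [Fact p.Prime] (hirr : Irreducible (cyclotomic (p ^ (n + 1)) K))
    {ζ : E} (hζ : IsPrimitiveRoot ζ (p ^ (n + 1))) :
    cyclotomic (p ^ (n + 1)) K ∣ minpoly K ζ := by
  by_contra hndvd
  have hcop : IsCoprime (minpoly K ζ) (cyclotomic (p ^ (n + 1)) K) :=
    (hirr.coprime_iff_not_dvd.mpr hndvd).symm
  have hdvd : minpoly K ζ ∣ cyclotomic (p ^ (n + 1)) K * (X ^ p ^ n - 1) := by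
    rw [cyclotomic_prime_pow_mul_X_pow_sub_one]
    exact minpoly.dvd K ζ (by simp [hζ.pow_eq_one])
  have hpow : ζ ^ p ^ n = 1 := by
    simpa [sub_eq_zero] using (minpoly.dvd_iff (A := K)).mp (hcop.dvd_of_dvd_mul_left hdvd)
  have hp : p.Prime := Fact.out
  exact hζ.pow_ne_one_of_pos_of_lt (pow_pos hp.pos n).ne'
    (Nat.pow_lt_pow_right hp.one_lt n.lt_succ_self) hpow

/-- Lemma `muApremark`(iv): if the unit group of a finite-dimensional commutative
`ℚ`-algebra `E` contains an element of order `p^k` (`p` prime, `k ≥ 1`), then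
`φ(p^k) ≤ dim_ℚ E`. -/
theorem stmt_7 {E : Type*} [CommRing E] [Algebra ℚ E] [FiniteDimensional ℚ E]
    (p k : ℕ) (hp : p.Prime) (hk : 0 < k)
    (u : Eˣ) (hu : orderOf u = p ^ k) :
    Nat.totient (p ^ k) ≤ Module.finrank ℚ E := by
  have : Fact p.Prime := ⟨hp⟩
  obtain ⟨n, rfl⟩ := Nat.exists_eq_add_one_of_ne_zero hk.ne'
  have hζ : IsPrimitiveRoot (u : E) (p ^ (n + 1)) :=
    IsPrimitiveRoot.iff_orderOf.mpr (orderOf_units.trans hu)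
  have hdvd := cyclotomic_prime_pow_dvd_minpoly (p := p) (n := n)
    (cyclotomic.irreducible_rat (pow_pos hp.pos _)) hζ
  calc Nat.totient (p ^ (n + 1)) = (cyclotomic (p ^ (n + 1)) ℚ).natDegree :=
        (natDegree_cyclotomic _ _).symm
    _ ≤ (minpoly ℚ (u : E)).natDegree :=
        natDegree_le_of_dvd hdvd (minpoly.ne_zero (IsIntegral.of_finite ℚ _))
    _ ≤ Module.finrank ℚ E := minpoly.natDegree_le _
end

section
/- Let E be a commutative ℚ-algebra that is finite-dimensional as a ℚ-vector space, and let E_sep denote the set of elements of E that are separable over ℚ. Then the map E_sep × √0 → E sending (x, y) to x + y is a bijection, where √0 is the nilradical of E. -/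
open Polynomial

/-- The lcm of two squarefree elements is squarefree. -/
private lemma squarefree_lcm_aux {a b : ℚ[X]} (ha : Squarefree a) (hb : Squarefree b) :
    Squarefree (lcm a b) := by
  have ha0 : a ≠ 0 := ha.ne_zero
  have hb0 : b ≠ 0 := hb.ne_zero
  have hl0 : lcm a b ≠ 0 := fun h => by rcases (lcm_eq_zero_iff a b).mp h with h | h <;> [exact ha0 h; exact hb0 h]
  rw [squarefree_iff_irreducible_sq_not_dvd_of_ne_zero hl0]
  intro p hp hsq
  have hpp : Prime p := hp.prime
  have hp0 : p ≠ 0 := hpp.ne_zero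
  have hdvdab : p * p ∣ a * b := hsq.trans (lcm_dvd (dvd_mul_right a b) (dvd_mul_left b a))
  have hpa_or : p ∣ a ∨ p ∣ b := hpp.dvd_mul.mp (dvd_of_mul_right_dvd hdvdab)
  -- first show p divides both a and b
  have key : ∀ x y : ℚ[X], Squarefree x → p ∣ x → p * p ∣ x * y → p ∣ y := by
    intro x y hx hpx hxy
    obtain ⟨c, rfl⟩ := hpx
    have hpc : ¬ p ∣ c := fun h => hp.not_isUnit (hx p (mul_dvd_mul_left p h))
    have : p ∣ c * y := by
      rw [mul_assoc] at hxy
      exact (mul_dvd_mul_iff_left hp0).mp hxy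
    exact (hpp.dvd_mul.mp this).resolve_left hpc
  have hpa : p ∣ a := by
    rcases hpa_or with h | h
    · exact h
    · have := key b a hb h (by rwa [mul_comm a b] at hdvdab)
      exact this
  have hpb : p ∣ b := key a b ha hpa hdvdab
  obtain ⟨c, rfl⟩ := hpa
  obtain ⟨d, rfl⟩ := hpb
  have hpc : ¬ p ∣ c := fun h => hp.not_isUnit (ha p (mul_dvd_mul_left p h))
  have hpd : ¬ p ∣ d := fun h => hp.not_isUnit (hb p (mul_dvd_mul_left p h))
  rw [lcm_mul_left] at hsq
  have hsq' : p * p ∣ p * lcm c d :=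
    hsq.trans (Associated.mul_right (normalize_associated p) _).dvd
  have : p ∣ lcm c d := (mul_dvd_mul_iff_left hp0).mp hsq'
  have : p ∣ c * d := this.trans (lcm_dvd (dvd_mul_right c d) (dvd_mul_left d c))
  exact (hpp.dvd_mul.mp this).elim hpc hpd

/-- An element of a commutative `ℚ`-algebra is separable over `ℚ` if it is a zero
of a separable polynomial `f ∈ ℚ[X]` (i.e. `IsCoprime f f'`). -/
def IsSeparableElem {E : Type*} [CommRing E] [Algebra ℚ E] (x : E) : Prop :=
  ∃ f : Polynomial ℚ, f.Separable ∧ Polynomial.aeval x f = 0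

private lemma sep_unique {E : Type*} [CommRing E] [Algebra ℚ E] {s₁ s₂ : E}
    (h₁ : IsSeparableElem s₁) (h₂ : IsSeparableElem s₂) (hn : IsNilpotent (s₁ - s₂)) :
    s₁ = s₂ := by
  obtain ⟨f₁, hf₁, hs₁⟩ := h₁
  obtain ⟨f₂, hf₂, hs₂⟩ := h₂
  set g : ℚ[X] := lcm f₁ f₂ with hg
  have hgsf : Squarefree g := squarefree_lcm_aux hf₁.squarefree hf₂.squarefree
  have hgsep : g.Separable := PerfectField.separable_iff_squarefree.mpr hgsf
  have hg₁ : aeval s₁ g = 0 := by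
    obtain ⟨q, hq⟩ := dvd_lcm_left f₁ f₂
    rw [hg, hq, map_mul, hs₁, zero_mul]
  have hg₂ : aeval s₂ g = 0 := by
    obtain ⟨q, hq⟩ := dvd_lcm_right f₁ f₂
    rw [hg, hq, map_mul, hs₂, zero_mul]
  have hnil : IsNilpotent (aeval s₁ g) := by rw [hg₁]; exact IsNilpotent.zero
  have hunit : IsUnit (aeval s₁ (derivative g)) := by
    obtain ⟨a, b, hab⟩ := hgsep
    have := congrArg (aeval s₁) hab
    simp only [map_add, map_mul, map_one, hg₁, mul_zero, zero_add] at this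
    exact IsUnit.of_mul_eq_one_right _ this
  obtain ⟨r, -, hu⟩ := Polynomial.existsUnique_nilpotent_sub_and_aeval_eq_zero hnil hunit
  have e1 : s₁ = r := hu s₁ ⟨by simp, hg₁⟩
  have e2 : s₂ = r := hu s₂ ⟨hn, hg₂⟩
  rw [e1, e2]

private lemma sep_exists {E : Type*} [CommRing E] [Algebra ℚ E] [FiniteDimensional ℚ E] (x : E) :
    ∃ s : E, IsSeparableElem s ∧ IsNilpotent (x - s) := by
  have hint : IsIntegral ℚ x := IsIntegral.of_finite ℚ x
  have hm0 : minpoly ℚ x ≠ 0 := minpoly.ne_zero hint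
  obtain ⟨g, k, hgsf, -, hmk⟩ := exists_squarefree_dvd_pow_of_ne_zero hm0
  have hgsep : g.Separable := PerfectField.separable_iff_squarefree.mpr hgsf
  have hnil : IsNilpotent (aeval x g) := by
    refine ⟨k, ?_⟩
    obtain ⟨q, hq⟩ := hmk
    rw [← map_pow, hq, map_mul, minpoly.aeval, zero_mul]
  have hunit : IsUnit (aeval x (derivative g)) := by
    obtain ⟨a, b, hab⟩ := hgsep
    have := congrArg (aeval x) hab
    simp only [map_add, map_mul, map_one] at this
    have hnl : IsNilpotent (aeval x a * aeval x g) :=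
      (Commute.all _ _).isNilpotent_mul_left hnil
    have : aeval x b * aeval x (derivative g) = 1 - aeval x a * aeval x g := by
      rw [← this]; ring
    have hu : IsUnit (aeval x b * aeval x (derivative g)) := this ▸ hnl.isUnit_one_sub
    exact isUnit_of_mul_isUnit_right hu
  obtain ⟨r, ⟨hrn, hr⟩, -⟩ := Polynomial.existsUnique_nilpotent_sub_and_aeval_eq_zero hnil hunit
  exact ⟨r, ⟨g, hgsep, hr⟩, hrn⟩

/-- Proposition `CRTforEred`, first part: for a finite-dimensional commutative
`ℚ`-algebra `E`, the map `E_sep × √0 → E`, `(x, y) ↦ x + y`, is bijective. -/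
theorem stmt_8 {E : Type*} [CommRing E] [Algebra ℚ E] [FiniteDimensional ℚ E] :
    Function.Bijective
      (fun p : {x : E // IsSeparableElem x} × (nilradical E) => (p.1 : E) + (p.2 : E)) := by
  constructor
  · rintro ⟨⟨s₁, hs₁⟩, ⟨n₁, hn₁⟩⟩ ⟨⟨s₂, hs₂⟩, ⟨n₂, hn₂⟩⟩ h
    simp only at h
    have hnil : IsNilpotent (s₁ - s₂) := by
      have : s₁ - s₂ = n₂ - n₁ := by linear_combination h
      rw [this]
      exact (Commute.all _ _).isNilpotent_sub (mem_nilradical.mp hn₂) (mem_nilradical.mp hn₁)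
    have hs : s₁ = s₂ := sep_unique hs₁ hs₂ hnil
    have hn : n₁ = n₂ := by
      subst hs
      exact add_left_cancel h
    simp [Prod.ext_iff, Subtype.ext_iff, hs, hn]
  · intro x
    obtain ⟨s, hs, hn⟩ := sep_exists x
    exact ⟨⟨⟨s, hs⟩, ⟨x - s, mem_nilradical.mpr hn⟩⟩, by simp⟩
end

section
/- Let E be a commutative ℚ-algebra that is finite-dimensional as a ℚ-vector space, and let E_sep denote the set of elements of E that are separable over ℚ. Then the map E_sep → ∏_{𝔪 ∈ Spec(E)} E/𝔪 induced by the quotient maps E → E/𝔪, where 𝔪 ranges over all prime ideals of E, is a bijection. -/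
/-!
An element `x` is separable exactly when multiplication by `x` is a semisimple endomorphism of
the `ℚ`-vector space `E`. Since `E` is Artinian, its primes are finitely many and maximal, so by
the Chinese remainder theorem `E → ∏ E/𝔪` is surjective, and its fibres are the cosets of the
nilradical. The Jordan–Chevalley decomposition of multiplication by `x` puts a separable element
in the coset of `x`; and two separable elements with nilpotent difference coincide, because their
difference acts semisimply and nilpotently, hence as zero.
-/

open Polynomial Module.End

lemma PrimeSpectrum.forall_mk_eq_iff_isNilpotent_sub {R : Type*} [CommRing R] {x y : R} :
    (∀ I : PrimeSpectrum R, Ideal.Quotient.mk I.asIdeal x = Ideal.Quotient.mk I.asIdeal y) ↔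
      IsNilpotent (x - y) := by
  simp only [Ideal.Quotient.eq, nilpotent_iff_mem_prime]
  exact ⟨fun h I hI ↦ h ⟨I, hI⟩, fun h I ↦ h I.asIdeal I.isPrime⟩

lemma IsArtinianRing.exists_mk_eq_of_primeSpectrum {R : Type*} [CommRing R] [IsArtinianRing R]
    (z : ∀ I : PrimeSpectrum R, R ⧸ I.asIdeal) :
    ∃ r : R, ∀ I : PrimeSpectrum R, Ideal.Quotient.mk I.asIdeal r = z I := by
  refine Ideal.pi_quotient_surjective (fun I J hIJ ↦ ?_) z
  rw [Function.onFun, Ideal.isCoprime_iff_sup_eq]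
  exact (isMaximal_of_isPrime I.asIdeal).coprime_of_ne (isMaximal_of_isPrime J.asIdeal)
    (mt PrimeSpectrum.ext hIJ)

section PerfectField

variable {K E : Type*} [Field K] [PerfectField K] [CommRing E] [Algebra K E]
  [FiniteDimensional K E]

lemma eq_of_isSemisimple_lmul_of_isNilpotent_sub {x y : E}
    (hx : (Algebra.lmul K E x).IsSemisimple) (hy : (Algebra.lmul K E y).IsSemisimple)
    (hxy : IsNilpotent (x - y)) : x = y := by
  have hsub : (Algebra.lmul K E (x - y)).IsSemisimple := by
    rw [map_sub]
    exact hx.sub_of_commute ((Commute.all x y).map _) hy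
  have hzero := eq_zero_of_isNilpotent_isSemisimple (hxy.map (Algebra.lmul K E)) hsub
  exact sub_eq_zero.mp (Algebra.lmul_injective (R := K) (hzero.trans (map_zero _).symm))

lemma exists_isSemisimple_lmul_isNilpotent_sub (x : E) :
    ∃ s : E, (Algebra.lmul K E s).IsSemisimple ∧ IsNilpotent (x - s) := by
  obtain ⟨n, -, s, hs, hn, hss, hdecomp⟩ := (Algebra.lmul K E x).exists_isNilpotent_isSemisimple
  have hrange : Algebra.adjoin K {Algebra.lmul K E x} ≤ (Algebra.lmul K E).range :=
    Algebra.adjoin_le (by simp)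
  obtain ⟨s, rfl⟩ := hrange hs
  refine ⟨s, hss, (IsNilpotent.map_iff (Algebra.lmul_injective (R := K))).mp ?_⟩
  rw [map_sub, hdecomp]
  simpa using hn

end PerfectField

lemma isSeparableElem_iff_isSemisimple_lmul {E : Type*} [CommRing E] [Algebra ℚ E]
    [FiniteDimensional ℚ E] (x : E) :
    IsSeparableElem x ↔ (Algebra.lmul ℚ E x).IsSemisimple := by
  constructor
  · rintro ⟨f, hf, hfx⟩
    refine isSemisimple_of_squarefree_aeval_eq_zero hf.squarefree ?_
    rw [aeval_algHom_apply, hfx, map_zero]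
  · intro hx
    refine ⟨minpoly ℚ x, ?_, minpoly.aeval ℚ x⟩
    rw [← minpoly.algHom_eq _ (Algebra.lmul_injective (R := ℚ)) x]
    exact PerfectField.separable_iff_squarefree.mpr hx.minpoly_squarefree

/-- Proposition `CRTforEred`, second part: for a finite-dimensional commutative
`ℚ`-algebra `E`, the map `E_sep → ∏_{𝔪 ∈ Spec E} E/𝔪` induced by the quotient
maps is bijective. -/
theorem stmt_9 {E : Type*} [CommRing E] [Algebra ℚ E] [FiniteDimensional ℚ E] :
    Function.Bijective
      (fun x : {x : E // IsSeparableElem x} =>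
        fun I : PrimeSpectrum E => Ideal.Quotient.mk I.asIdeal (x : E)) := by
  have : IsArtinianRing E := .of_finite ℚ E
  constructor
  · rintro ⟨x, hx⟩ ⟨y, hy⟩ hxy
    exact Subtype.ext <| eq_of_isSemisimple_lmul_of_isNilpotent_sub
      ((isSeparableElem_iff_isSemisimple_lmul x).mp hx)
      ((isSeparableElem_iff_isSemisimple_lmul y).mp hy)
      (PrimeSpectrum.forall_mk_eq_iff_isNilpotent_sub.mp (congrFun hxy))
  · intro z
    obtain ⟨x, hx⟩ := IsArtinianRing.exists_mk_eq_of_primeSpectrum z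
    obtain ⟨s, hs, hxs⟩ := exists_isSemisimple_lmul_isNilpotent_sub (K := ℚ) x
    refine ⟨⟨s, (isSeparableElem_iff_isSemisimple_lmul s).mpr hs⟩, funext fun I ↦ ?_⟩
    rw [← hx]
    exact (PrimeSpectrum.forall_mk_eq_iff_isNilpotent_sub.mpr hxs I).symm
end

section
/- Let E be a commutative ℚ-algebra that is finite-dimensional as a ℚ-vector space. Then the group homomorphism μ(E) → ∏_{𝔪 ∈ Spec(E)} μ(E/𝔪) induced by the quotient maps E → E/𝔪, where 𝔪 ranges over all prime ideals of E, is an isomorphism of groups (i.e., bijective). -/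
open Polynomial Finset

/-- Second-order binomial expansion in a commutative ring. -/
lemma aux_one_add_pow {E : Type*} [CommRing E] (x : E) (m : ℕ) :
    ∃ y : E, (1 + x) ^ m = 1 + (m : E) * x + x ^ 2 * y := by
  induction m with
  | zero => exact ⟨0, by simp⟩
  | succ m ih =>
    obtain ⟨y, hy⟩ := ih
    refine ⟨(m : E) + y + x * y, ?_⟩
    rw [pow_succ, hy]
    push_cast
    ring

/-- In a `ℚ`-algebra, a unipotent torsion element is trivial. -/
lemma aux_unipotent {E : Type*} [CommRing E] [Algebra ℚ E] {x : E}
    (hx : IsNilpotent x) {m : ℕ} (hm : 0 < m) (h : (1 + x) ^ m = 1) : x = 0 := by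
  obtain ⟨k, hk⟩ := hx
  induction k using Nat.strong_induction_on generalizing x with
  | _ k ih =>
    match k with
    | 0 =>
      have : (1 : E) = 0 := by simpa using hk
      calc x = x * 1 := by ring
        _ = 0 := by rw [this]; ring
    | 1 => simpa using hk
    | (j+2) =>
      obtain ⟨y, hy⟩ := aux_one_add_pow x m
      have h1 : (m : E) * x + x ^ 2 * y = 0 := by
        have := h
        rw [hy] at this
        linear_combination this
      have h2 : (m : E) * x ^ (j+1) = 0 := by
        have := congrArg (· * x ^ j) h1
        simp only [add_mul, zero_mul] at this
        calc (m : E) * x ^ (j+1) = (m : E) * x * x ^ j + x ^ 2 * y * x ^ j - x ^ 2 * y * x ^ j := by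
              ring
          _ = 0 - x ^ 2 * y * x ^ j := by rw [this]
          _ = - (y * x ^ (j+2)) := by ring
          _ = 0 := by rw [hk]; ring
      have hmu : IsUnit ((m : E)) := by
        have h4 : algebraMap ℚ E (m : ℚ) = (m : E) := by
          simp
        rw [← h4]
        refine (algebraMap ℚ E).isUnit_map (isUnit_iff_ne_zero.mpr ?_)
        exact_mod_cast hm.ne'
      have h3 : x ^ (j+1) = 0 := by
        obtain ⟨u, hu⟩ := hmu
        have := congrArg (fun t => (↑u⁻¹ : E) * t) h2
        simpa [← hu, ← mul_assoc, Units.inv_mul] using this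
      exact ih (j+1) (by omega) h h3

/-- Newton iteration: approximate `n`-th roots of `1 + X` over `ℚ`. -/
lemma aux_root_poly (n : ℕ) (hn : 0 < n) (k : ℕ) :
    ∃ p : ℚ[X], p.eval 0 = 1 ∧ (X : ℚ[X]) ^ (k + 1) ∣ p ^ n - (1 + X) := by
  induction k with
  | zero =>
    refine ⟨1, by simp, ?_⟩
    have : (1 : ℚ[X]) ^ n - (1 + X) = X * (-1) := by ring
    exact ⟨-1, by rw [this, pow_one]⟩
  | succ k ih =>
    obtain ⟨p, hp0, q, hq⟩ := ih
    set c : ℚ := q.eval 0 / n with hc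
    set p' : ℚ[X] := p - C c * X ^ (k + 1) with hp'
    have hp'0 : p'.eval 0 = 1 := by simp [hp', hp0]
    refine ⟨p', hp'0, ?_⟩
    -- geometric sum identity
    set S : ℚ[X] := ∑ i ∈ range n, p' ^ i * p ^ (n - 1 - i) with hS
    have hgeom : S * (p' - p) = p' ^ n - p ^ n := geom_sum₂_mul p' p n
    have hSeval : S.eval 0 = n := by
      simp [hS, eval_finset_sum, hp0, hp'0]
    -- S - C n is divisible by X
    have hS1 : (X : ℚ[X]) ∣ S - C (n : ℚ) := by
      rw [X_dvd_iff]
      simp [coeff_zero_eq_eval_zero, hSeval]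
    obtain ⟨r, hr⟩ := hS1
    -- q - C (c * n) is divisible by X
    have hq1 : (X : ℚ[X]) ∣ q - C c * C (n : ℚ) := by
      rw [X_dvd_iff]
      have h5 : c * n = q.eval 0 := by
        rw [hc, div_mul_cancel₀]; exact_mod_cast hn.ne'
      simp [coeff_zero_eq_eval_zero, h5]
    obtain ⟨s, hs⟩ := hq1
    refine ⟨s - C c * r, ?_⟩
    have key : p' ^ n - (1 + X) = X ^ (k + 1) * q - C c * X ^ (k + 1) * S := by
      have h1 : p' - p = - (C c * X ^ (k + 1)) := by rw [hp']; ring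
      have h2 : p' ^ n - p ^ n = - (C c * X ^ (k + 1)) * S := by
        rw [← hgeom, h1]; ring
      calc p' ^ n - (1 + X) = (p' ^ n - p ^ n) + (p ^ n - (1 + X)) := by ring
        _ = - (C c * X ^ (k + 1)) * S + X ^ (k + 1) * q := by rw [h2, hq]
        _ = X ^ (k + 1) * q - C c * X ^ (k + 1) * S := by ring
    rw [key]
    have hqexp : q = X * s + C c * C (n : ℚ) := by linear_combination hs
    have hSexp : S = X * r + C (n : ℚ) := by linear_combination hr
    rw [hqexp, hSexp]
    ring

/-- In a `ℚ`-algebra, `1 + ε` with `ε` nilpotent has an `n`-th root of the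
same form. -/
lemma aux_nilpotent_root {E : Type*} [CommRing E] [Algebra ℚ E] {ε : E}
    (hε : IsNilpotent ε) {n : ℕ} (hn : 0 < n) :
    ∃ δ : E, IsNilpotent δ ∧ (1 + δ) ^ n = 1 + ε := by
  obtain ⟨k, hk⟩ := hε
  obtain ⟨p, hp0, g, hg⟩ := aux_root_poly n hn k
  set δ : E := aeval ε p - 1 with hδ
  have hXdvd : (X : ℚ[X]) ∣ p - 1 := by
    rw [X_dvd_iff]
    simp [coeff_zero_eq_eval_zero, hp0]
  obtain ⟨t, ht⟩ := hXdvd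
  refine ⟨δ, ?_, ?_⟩
  · have : δ = ε * aeval ε t := by
      rw [hδ]
      have := congrArg (aeval ε) ht
      simp only [map_sub, map_mul, map_one, aeval_X] at this
      rw [this]
    rw [this]
    exact ⟨k, by rw [mul_pow, hk, zero_mul]⟩
  · have h1 : (1 + δ) = aeval ε p := by rw [hδ]; ring
    have h3 : aeval ε (p ^ n) = aeval ε (X ^ (k+1) * g) + aeval ε ((1 : ℚ[X]) + X) := by
      rw [← map_add]
      congr 1
      linear_combination hg
    rw [h1, ← map_pow, h3]
    simp [hk, pow_succ]

/-- Lemma `muApremark`(i): for a finite-dimensional commutative `ℚ`-algebra `E`,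
the group homomorphism `μ(E) → ∏_{𝔪 ∈ Spec E} μ(E/𝔪)` induced by the quotient
maps `E → E/𝔪` is bijective. Here `μ(R)` is the torsion subgroup of `Rˣ`. -/
theorem stmt_10 {E : Type*} [CommRing E] [Algebra ℚ E] [FiniteDimensional ℚ E] :
    Function.Bijective
      (fun u : CommGroup.torsion Eˣ =>
        fun I : PrimeSpectrum E =>
          (⟨Units.map (Ideal.Quotient.mk I.asIdeal).toMonoidHom (u : Eˣ),
            MonoidHom.isOfFinOrder _ u.2⟩ :
            CommGroup.torsion (E ⧸ I.asIdeal)ˣ)) := by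
  classical
  have hart : IsArtinianRing E := isArtinian_of_tower ℚ inferInstance
  haveI : Finite (PrimeSpectrum E) := by
    have hfin := IsArtinianRing.setOfPred_isPrime_finite E
    have : Finite {I : Ideal E // I.IsPrime} := hfin.to_subtype
    exact Finite.of_injective
      (fun I : PrimeSpectrum E => (⟨I.asIdeal, I.2⟩ : {I : Ideal E // I.IsPrime}))
      (fun I J h => PrimeSpectrum.ext (congrArg Subtype.val h))
  haveI : Fintype (PrimeSpectrum E) := Fintype.ofFinite _
  constructor
  · -- Injectivity
    intro u v h
    have hIv : ∀ I : PrimeSpectrum E,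
        Ideal.Quotient.mk I.asIdeal (u : Eˣ) = Ideal.Quotient.mk I.asIdeal (v : Eˣ) := by
      intro I
      have := congrFun h I
      have h2 := congrArg (fun z => ((z : CommGroup.torsion (E ⧸ I.asIdeal)ˣ) : (E ⧸ I.asIdeal)ˣ))
        this
      exact congrArg Units.val h2
    have hnil : IsNilpotent (((u : Eˣ) : E) - ((v : Eˣ) : E)) := by
      rw [nilpotent_iff_mem_prime]
      intro J hJ
      have := hIv ⟨J, hJ⟩
      exact (Ideal.Quotient.eq (I := J)).mp this
    -- consider w = u * v⁻¹
    set w : Eˣ := (u : Eˣ) * (v : Eˣ)⁻¹ with hw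
    have hwtor : IsOfFinOrder w := (u.2).mul ((v.2).inv)
    obtain ⟨m, hm, hwm⟩ := hwtor.exists_pow_eq_one
    set x : E := (((u : Eˣ) : E) - ((v : Eˣ) : E)) * (((v : Eˣ)⁻¹ : Eˣ) : E) with hx
    have hxnil : IsNilpotent x := by
      obtain ⟨k, hk⟩ := hnil
      exact ⟨k, by rw [hx, mul_pow, hk, zero_mul]⟩
    have hwval : ((w : Eˣ) : E) = 1 + x := by
      rw [hx, hw]
      have : (((v : Eˣ) : E)) * (((v : Eˣ)⁻¹ : Eˣ) : E) = 1 := by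
        rw [← Units.val_mul, mul_inv_cancel, Units.val_one]
      push_cast
      linear_combination this
    have hpow : (1 + x) ^ m = 1 := by
      rw [← hwval]
      calc ((w : Eˣ) : E) ^ m = ((w ^ m : Eˣ) : E) := by rw [Units.val_pow_eq_pow_val]
        _ = 1 := by rw [hwm, Units.val_one]
    have hx0 : x = 0 := aux_unipotent hxnil hm hpow
    have hweq : w = 1 := by
      ext
      rw [hwval, hx0, add_zero, Units.val_one]
    have : (u : Eˣ) = (v : Eˣ) := by
      have := congrArg (fun z => z * (v : Eˣ)) hweq
      simpa [hw, mul_assoc] using this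
    exact Subtype.ext this
  · -- Surjectivity
    intro f
    -- the common exponent
    set m : ℕ := ∏ I : PrimeSpectrum E, orderOf ((f I : (E ⧸ I.asIdeal)ˣ)) with hm
    have hmpos : 0 < m := by
      refine Finset.prod_pos fun I _ => ?_
      exact (f I).2.orderOf_pos
    have hfm : ∀ I : PrimeSpectrum E, ((f I : (E ⧸ I.asIdeal)ˣ)) ^ m = 1 := by
      intro I
      refine orderOf_dvd_iff_pow_eq_one.mp ?_
      exact Finset.dvd_prod_of_mem _ (Finset.mem_univ I)
    -- CRT lift
    have hmax : ∀ I : PrimeSpectrum E, I.asIdeal.IsMaximal := by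
      intro I
      haveI := I.2
      exact IsArtinianRing.isMaximal_of_isPrime I.asIdeal
    have hcop : Pairwise (Function.onFun IsCoprime fun I : PrimeSpectrum E => I.asIdeal) := by
      intro I J hIJ
      exact Ideal.isCoprime_iff_sup_eq.mpr (Ideal.IsMaximal.coprime_of_ne (hmax I) (hmax J)
        (fun hEq => hIJ (PrimeSpectrum.ext hEq)))
    obtain ⟨z, hz⟩ := Ideal.quotientInfToPiQuotient_surj hcop
      (fun I => ((f I : (E ⧸ I.asIdeal)ˣ) : E ⧸ I.asIdeal))
    obtain ⟨v, rfl⟩ := Ideal.Quotient.mk_surjective z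
    have hv : ∀ I : PrimeSpectrum E,
        Ideal.Quotient.mk I.asIdeal v = ((f I : (E ⧸ I.asIdeal)ˣ) : E ⧸ I.asIdeal) := by
      intro I
      have := congrFun hz I
      rwa [Ideal.quotientInfToPiQuotient_mk'] at this
    -- v is a unit
    have hvu : IsUnit v := by
      by_contra hnv
      obtain ⟨M, hM, hvM⟩ := Ideal.exists_le_maximal (Ideal.span {v})
        (fun htop => hnv (Ideal.span_singleton_eq_top.mp htop))
      set I : PrimeSpectrum E := ⟨M, hM.isPrime⟩ with hI
      have h0 : Ideal.Quotient.mk I.asIdeal v = 0 :=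
        Ideal.Quotient.eq_zero_iff_mem.mpr (hvM (Ideal.subset_span rfl))
      have hzu : IsUnit ((0 : E ⧸ I.asIdeal)) := by
        rw [← h0, hv I]
        exact (f I : (E ⧸ I.asIdeal)ˣ).isUnit
      haveI : Nontrivial (E ⧸ I.asIdeal) := Ideal.Quotient.nontrivial_iff.mpr hM.ne_top
      exact not_isUnit_zero hzu
    -- v ^ m - 1 is nilpotent
    have hεnil : IsNilpotent (v ^ m - 1) := by
      rw [nilpotent_iff_mem_prime]
      intro J hJ
      set I : PrimeSpectrum E := ⟨J, hJ⟩ with hI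
      rw [← Ideal.Quotient.eq_zero_iff_mem (I := J)]
      have hcast : Ideal.Quotient.mk J (v ^ m - 1)
          = (Ideal.Quotient.mk J v) ^ m - 1 := by
        simp [map_sub, map_pow]
      rw [hcast, hv I]
      have := hfm I
      rw [← Units.val_pow_eq_pow_val, this, Units.val_one, sub_self]
    obtain ⟨δ, hδnil, hδ⟩ := aux_nilpotent_root hεnil hmpos
    have hδeq : (1 + δ) ^ m = v ^ m := by rw [hδ]; ring
    have hδu : IsUnit (1 + δ) := hδnil.isUnit_one_add
    -- the root of unity
    set u : Eˣ := hvu.unit * (hδu.unit)⁻¹ with hu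
    have hunits : hvu.unit ^ m = hδu.unit ^ m := by
      ext
      rw [Units.val_pow_eq_pow_val, Units.val_pow_eq_pow_val, IsUnit.unit_spec,
        IsUnit.unit_spec, hδeq]
    have hum : u ^ m = 1 := by
      rw [hu, mul_pow, inv_pow, hunits, mul_inv_cancel]
    have hut : IsOfFinOrder u := isOfFinOrder_iff_pow_eq_one.mpr ⟨m, hmpos, hum⟩
    refine ⟨⟨u, hut⟩, ?_⟩
    funext I
    refine Subtype.ext (Units.ext ?_)
    haveI := I.2
    have hδ0 : Ideal.Quotient.mk I.asIdeal δ = 0 := by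
      have : IsNilpotent (Ideal.Quotient.mk I.asIdeal δ) := hδnil.map _
      exact this.eq_zero
    show Ideal.Quotient.mk I.asIdeal ((u : Eˣ) : E)
        = ((f I : (E ⧸ I.asIdeal)ˣ) : E ⧸ I.asIdeal)
    have hcancel : ((u : Eˣ) : E) * (1 + δ) = v := by
      have h6 : (u * hδu.unit : Eˣ) = hvu.unit := by
        rw [hu, mul_assoc, inv_mul_cancel, mul_one]
      have h7 := congrArg Units.val h6
      simpa [Units.val_mul, IsUnit.unit_spec] using h7
    calc Ideal.Quotient.mk I.asIdeal ((u : Eˣ) : E)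
        = Ideal.Quotient.mk I.asIdeal ((u : Eˣ) : E)
          * Ideal.Quotient.mk I.asIdeal (1 + δ) := by
          rw [map_add, map_one, hδ0, add_zero, mul_one]
      _ = Ideal.Quotient.mk I.asIdeal (((u : Eˣ) : E) * (1 + δ)) := by rw [map_mul]
      _ = Ideal.Quotient.mk I.asIdeal v := by rw [hcancel]
      _ = ((f I : (E ⧸ I.asIdeal)ˣ) : E ⧸ I.asIdeal) := hv I
end

section
/- Let D be a commutative ring whose additive group is a free ℤ-module of finite rank, let E = D ⊗_ℤ ℚ, and let 𝔪 and 𝔫 be two distinct maximal ideals of E. Let 𝔪 ∩ D and 𝔫 ∩ D denote the preimages of 𝔪 and 𝔫 under the canonical map D → E. Then the quotient ring D/((𝔪 ∩ D) + (𝔫 ∩ D)) is finite. -/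
/-!
Since `𝔪 + 𝔫 = E`, write `1 = m + n` with `m ∈ 𝔪`, `n ∈ 𝔫`. Clearing denominators in `m` and `n`
puts a nonzero integer `k` into `(𝔪 ∩ D) + (𝔫 ∩ D)`, so `D/((𝔪 ∩ D) + (𝔫 ∩ D))` is a finitely
generated abelian group killed by `k`, hence finite.
-/

open TensorProduct

section ClearDenominators

variable {D E : Type*} [CommRing D] [CommRing E] (f : D →+* E)

def ReachesIntMultiples : Prop :=
  ∀ x : E, ∃ k : ℤ, k ≠ 0 ∧ ∃ d : D, f d = k • x

variable {f}

lemma ReachesIntMultiples.exists_mem_comap (hf : ReachesIntMultiples f) {I : Ideal E} {x : E}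
    (hx : x ∈ I) : ∃ k : ℤ, k ≠ 0 ∧ ∃ d ∈ I.comap f, f d = k • x := by
  obtain ⟨k, hk, d, hd⟩ := hf x
  exact ⟨k, hk, d, by simpa [Ideal.mem_comap, hd] using zsmul_mem hx k, hd⟩

lemma ReachesIntMultiples.exists_intCast_mem_comap_sup_comap (hf : ReachesIntMultiples f)
    {I J : Ideal E} (hIJ : I ⊔ J = ⊤) :
    ∃ k : ℤ, k ≠ 0 ∧ (k : D) ∈ I.comap f ⊔ J.comap f := by
  obtain ⟨m, hm, n, hn, hmn⟩ := Submodule.mem_sup.mp (hIJ ▸ Submodule.mem_top (x := (1 : E)))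
  obtain ⟨k₁, hk₁, a, ha, hfa⟩ := hf.exists_mem_comap hm
  obtain ⟨k₂, hk₂, b, hb, hfb⟩ := hf.exists_mem_comap hn
  refine ⟨k₁ * k₂, mul_ne_zero hk₁ hk₂, ?_⟩
  -- `k₂ • a + k₁ • b` and the integer `k₁ * k₂` both map to `k₁ * k₂ • (m + n)`.
  have hker : ((k₁ * k₂ : ℤ) : D) - (k₂ • a + k₁ • b) ∈ I.comap f := by
    refine Ideal.mem_comap.mpr ?_
    have : f ((k₁ * k₂ : ℤ) : D) = f (k₂ • a + k₁ • b) := by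
      rw [map_add, map_zsmul, map_zsmul, hfa, hfb, smul_smul, smul_smul, mul_comm k₂,
        ← smul_add, hmn, map_intCast, zsmul_one]
    rw [map_sub, this, sub_self]
    exact I.zero_mem
  have hsplit : ((k₁ * k₂ : ℤ) : D) =
      (((k₁ * k₂ : ℤ) : D) - (k₂ • a + k₁ • b) + k₂ • a) + k₁ • b := by
    abel
  rw [hsplit]
  exact add_mem (Ideal.mem_sup_left (add_mem hker (zsmul_mem ha k₂)))
    (Ideal.mem_sup_right (zsmul_mem hb k₁))

end ClearDenominators

lemma reachesIntMultiples_includeRight (D : Type*) [CommRing D] :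
    ReachesIntMultiples
      (Algebra.TensorProduct.includeRight (R := ℤ) (A := ℚ) (B := D)).toRingHom := by
  have : IsLocalizedModule (nonZeroDivisors ℤ) (TensorProduct.mk ℤ ℚ D 1) :=
    (isLocalizedModule_iff_isBaseChange (nonZeroDivisors ℤ) ℚ _).mpr
      (TensorProduct.isBaseChange ℤ D ℚ)
  intro x
  obtain ⟨⟨d, k⟩, hk⟩ :=
    IsLocalizedModule.surj (nonZeroDivisors ℤ) (TensorProduct.mk ℤ ℚ D 1) x
  exact ⟨k, nonZeroDivisors.coe_ne_zero k, d, hk.symm⟩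

lemma finite_quotient_of_intCast_mem {R : Type*} [CommRing R] [Module.Finite ℤ R] (I : Ideal R)
    {k : ℤ} (hk : k ≠ 0) (hkI : (k : R) ∈ I) : Finite (R ⧸ I) := by
  have : Module.Finite ℤ (R ⧸ I) :=
    Module.Finite.of_surjective (Ideal.Quotient.mk I).toIntAlgHom.toLinearMap
      Ideal.Quotient.mk_surjective
  refine Module.finite_of_fg_torsion _ fun x ↦ ?_
  obtain ⟨r, rfl⟩ := Ideal.Quotient.mk_surjective x
  refine ⟨⟨k, mem_nonZeroDivisors_of_ne_zero hk⟩, ?_⟩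
  change k • Ideal.Quotient.mk I r = 0
  rw [← map_zsmul, zsmul_eq_mul, Ideal.Quotient.eq_zero_iff_mem]
  exact I.mul_mem_right r hkI

theorem stmt_12_general {D : Type*} [CommRing D] [Module.Finite ℤ D]
    (𝔪 𝔫 : Ideal (ℚ ⊗[ℤ] D)) (h𝔪 : 𝔪.IsMaximal) (h𝔫 : 𝔫.IsMaximal) (hne : 𝔪 ≠ 𝔫) :
    Finite (D ⧸
      (Ideal.comap (Algebra.TensorProduct.includeRight (R := ℤ) (A := ℚ) (B := D)).toRingHom 𝔪 ⊔
       Ideal.comap (Algebra.TensorProduct.includeRight (R := ℤ) (A := ℚ) (B := D)).toRingHom 𝔫)) := by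
  obtain ⟨k, hk, hkI⟩ := (reachesIntMultiples_includeRight D).exists_intCast_mem_comap_sup_comap
    (h𝔪.coprime_of_ne h𝔫 hne)
  exact finite_quotient_of_intCast_mem _ hk hkI

/-- Lemma `nDlem`: if `D` is an order (a commutative ring whose additive group is
free of finite rank over `ℤ`), `E = ℚ ⊗_ℤ D`, and `𝔪 ≠ 𝔫` are maximal ideals of
`E`, then `D/((𝔪 ∩ D) + (𝔫 ∩ D))` is finite, where `𝔪 ∩ D` denotes the contraction
of `𝔪` along the canonical map `D → E`. -/
theorem stmt_12 {D : Type*} [CommRing D] [Module.Free ℤ D] [Module.Finite ℤ D]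
    (𝔪 𝔫 : Ideal (ℚ ⊗[ℤ] D)) (h𝔪 : 𝔪.IsMaximal) (h𝔫 : 𝔫.IsMaximal) (hne : 𝔪 ≠ 𝔫) :
    Finite (D ⧸
      (Ideal.comap (Algebra.TensorProduct.includeRight (R := ℤ) (A := ℚ) (B := D)).toRingHom 𝔪 ⊔
       Ideal.comap (Algebra.TensorProduct.includeRight (R := ℤ) (A := ℚ) (B := D)).toRingHom 𝔫)) :=
  stmt_12_general 𝔪 𝔫 h𝔪 h𝔫 hne
end

section
/- Let p be a prime number, let r be a non-negative integer, let X and Y be finite abelian groups with the order of Y coprime to p, and suppose there are group homomorphisms a : X → Y and b : Y → X such that a ∘ b is multiplication by p^r on Y and b ∘ a is multiplication by p^r on X. Then a is surjective, the kernel of a is the p-primary torsion subgroup of X, and consequently a restricts to an isomorphism from the subgroup of elements of X of order coprime to p onto Y. -/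
/-!
Since `p` is prime to `|Y|`, multiplication by any power of `p` is a bijection of `Y`. Hence
`a ∘ b = p ^ r` makes `a` surjective, and `b ∘ a = p ^ r` puts `ker a` inside the `p`-primary
part, while `a` kills the `p`-primary part because `Y` has none. An element of order prime to `p`
that is killed by a power of `p` is zero, which gives injectivity on the prime-to-`p` part; and
`b` maps `Y` into that part, which gives surjectivity.
-/

lemma eq_zero_of_pow_nsmul_eq_zero_of_coprime {G : Type*} [AddMonoid G] {x : G} {p k : ℕ}
    (hx : (addOrderOf x).Coprime p) (h : p ^ k • x = 0) : x = 0 :=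
  AddMonoid.addOrderOf_eq_one_iff.1 <|
    (hx.pow_right k).eq_one_of_dvd (addOrderOf_dvd_of_nsmul_eq_zero h)

lemma coprime_addOrderOf_sub {G : Type*} [AddCommGroup G] {x y : G} {p : ℕ}
    (hx : (addOrderOf x).Coprime p) (hy : (addOrderOf y).Coprime p) :
    (addOrderOf (x - y)).Coprime p := by
  have hdvd := (AddCommute.all x (-y)).addOrderOf_add_dvd_mul_addOrderOf
  rw [addOrderOf_neg, ← sub_eq_add_neg] at hdvd
  exact (hx.mul_left hy).coprime_dvd_left hdvd

lemma coprime_addOrderOf_map_of_coprime_card {G H : Type*} [AddGroup G] [AddMonoid H] {p : ℕ}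
    (hG : (Nat.card G).Coprime p) (f : G →+ H) (y : G) : (addOrderOf (f y)).Coprime p :=
  hG.coprime_dvd_left ((addOrderOf_map_dvd f y).trans (addOrderOf_dvd_natCard y))

theorem stmt_13_general {X Y : Type*} [AddCommGroup X] [AddCommGroup Y]
    (p : ℕ) (r : ℕ) (hcop : Nat.Coprime (Nat.card Y) p)
    (a : X →+ Y) (b : Y →+ X)
    (hab : ∀ y : Y, a (b y) = p ^ r • y) (hba : ∀ x : X, b (a x) = p ^ r • x) :
    Function.Surjective a ∧
    (∀ x : X, a x = 0 ↔ ∃ k : ℕ, p ^ k • x = 0) ∧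
    Function.Bijective
      (fun x : {x : X // Nat.Coprime (addOrderOf x) p} => a (x : X)) := by
  have hmul (k : ℕ) : Function.Bijective (fun y : Y => p ^ k • y) :=
    (hcop.pow_right k).nsmul_right_bijective
  have hker (x : X) : a x = 0 ↔ ∃ k : ℕ, p ^ k • x = 0 := by
    refine ⟨fun h => ⟨r, by rw [← hba, h, map_zero]⟩, fun ⟨k, hk⟩ => (hmul k).1 ?_⟩
    simp only [← map_nsmul, hk, map_zero, smul_zero]
  refine ⟨fun y => ?_, hker, ?_, fun y => ?_⟩
  · obtain ⟨y', rfl⟩ := (hmul r).2 y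
    exact ⟨b y', hab y'⟩
  · rintro ⟨x₁, h₁⟩ ⟨x₂, h₂⟩ h
    obtain ⟨k, hk⟩ := (hker (x₁ - x₂)).1 (by rw [map_sub, sub_eq_zero]; exact h)
    exact Subtype.ext <| sub_eq_zero.1 <|
      eq_zero_of_pow_nsmul_eq_zero_of_coprime (coprime_addOrderOf_sub h₁ h₂) hk
  · obtain ⟨y', rfl⟩ := (hmul r).2 y
    exact ⟨⟨b y', coprime_addOrderOf_map_of_coprime_card hcop b y'⟩, hab y'⟩

/-- Abstract content of Proposition `nonpcptprop`: if `X, Y` are finite abelian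
groups, the order of `Y` is coprime to the prime `p`, and `a : X → Y`, `b : Y → X`
are homomorphisms with `a ∘ b = p^r` on `Y` and `b ∘ a = p^r` on `X`, then `a` is
surjective, its kernel is the `p`-primary part of `X`, and `a` restricts to a
bijection from the subgroup of elements of `X` of order coprime to `p` onto `Y`. -/
theorem stmt_13 {X Y : Type*} [AddCommGroup X] [AddCommGroup Y] [Finite X] [Finite Y]
    (p : ℕ) (hp : p.Prime) (r : ℕ) (hcop : Nat.Coprime (Nat.card Y) p)
    (a : X →+ Y) (b : Y →+ X)
    (hab : ∀ y : Y, a (b y) = p ^ r • y) (hba : ∀ x : X, b (a x) = p ^ r • x) :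
    Function.Surjective a ∧
    (∀ x : X, a x = 0 ↔ ∃ k : ℕ, p ^ k • x = 0) ∧
    Function.Bijective
      (fun x : {x : X // Nat.Coprime (addOrderOf x) p} => a (x : X)) :=
  stmt_13_general p r hcop a b hab hba
end

section
/- Let R be a commutative ring whose additive group is torsion-free, and let p be a prime number such that the localization R[1/p] of R away from p is connected. Then for every non-negative integer k, the set {ζ ∈ R : ζ^{p^k} = 1} is a finite cyclic group under multiplication whose order divides p^k. -/
section Stmt14Aux

variable {A : Type*} [CommRing A] [Nontrivial A] {p : ℕ}

/-- In a connected ring where `p` is a unit, a nontrivial `p`-th root of unity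
has vanishing geometric sum. -/
lemma stmt14_sum_eq_zero (hp : p.Prime) (hu : IsUnit ((p : ℕ) : A))
    (hconn : ∀ e : A, IsIdempotentElem e → e = 0 ∨ e = 1)
    {ζ : A} (h1 : ζ ^ p = 1) (h2 : ζ ≠ 1) :
    ∑ i ∈ Finset.range p, ζ ^ i = 0 := by
  obtain ⟨v, hv⟩ : ∃ v : A, v * (p : A) = 1 := by
    obtain ⟨u, hu'⟩ := hu
    exact ⟨(↑u⁻¹ : Aˣ), by rw [← hu', Units.inv_mul]⟩
  set s : A := ∑ i ∈ Finset.range p, ζ ^ i with hs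
  have hs1 : s * (ζ - 1) = 0 := by rw [geom_sum_mul, h1, sub_self]
  have hζs : ζ * s = s := by
    have : s * ζ - s * 1 = 0 := by rw [← mul_sub]; exact hs1
    have := sub_eq_zero.mp this
    rw [mul_one] at this
    rw [mul_comm]; exact this
  have hpow : ∀ i : ℕ, ζ ^ i * s = s := by
    intro i
    induction i with
    | zero => rw [pow_zero, one_mul]
    | succ n ihn => rw [pow_succ, mul_assoc, hζs, ihn]
  have hss : s * s = (p : A) * s := by
    calc s * s = ∑ i ∈ Finset.range p, ζ ^ i * s := by rw [← Finset.sum_mul]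
      _ = ∑ _i ∈ Finset.range p, s := Finset.sum_congr rfl fun i _ => hpow i
      _ = (p : A) * s := by rw [Finset.sum_const, Finset.card_range, nsmul_eq_mul]
  have hps : (p : A) * (v * s) = s := by
    calc (p : A) * (v * s) = (v * (p : A)) * s := by ring
      _ = s := by rw [hv, one_mul]
  have hidem : IsIdempotentElem (v * s) := by
    unfold IsIdempotentElem
    calc (v * s) * (v * s) = v * (v * (s * s)) := by ring
      _ = v * (v * ((p : A) * s)) := by rw [hss]
      _ = (v * (p : A)) * (v * s) := by ring
      _ = v * s := by rw [hv, one_mul]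
  rcases hconn _ hidem with h0 | h1e
  · rw [← hps, h0, mul_zero]
  · exfalso
    have hsp : s = (p : A) := by rw [← hps, h1e, mul_one]
    have : ζ * (p : A) = (p : A) := by rw [← hsp]; exact hζs
    apply h2
    calc ζ = ζ * ((p : A) * v) := by rw [mul_comm (p : A) v, hv, mul_one]
      _ = (ζ * (p : A)) * v := by ring
      _ = (p : A) * v := by rw [this]
      _ = 1 := by rw [mul_comm]; exact hv

/-- Every `p`-th root of unity is a power of any fixed nontrivial one. -/
lemma stmt14_root_mem_powers (hp : p.Prime) (hu : IsUnit ((p : ℕ) : A))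
    (hconn : ∀ e : A, IsIdempotentElem e → e = 0 ∨ e = 1)
    {ζ0 η : A} (h0 : ζ0 ^ p = 1) (h0' : ζ0 ≠ 1) (hη : η ^ p = 1) :
    ∃ j : ℕ, η = ζ0 ^ j := by
  by_contra hcon
  push_neg at hcon
  have hord : orderOf ζ0 = p := by
    rcases (Nat.Prime.eq_one_or_self_of_dvd hp _ (orderOf_dvd_of_pow_eq_one h0)) with h | h
    · exact absurd (orderOf_eq_one_iff.mp h) h0'
    · exact h
  have hne1 : ∀ j : ℕ, 0 < j → j < p → ζ0 ^ j ≠ 1 := by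
    intro j hj1 hj2 hje
    have hdvd := orderOf_dvd_of_pow_eq_one hje
    rw [hord] at hdvd
    have := Nat.le_of_dvd hj1 hdvd
    omega
  obtain ⟨c, hc1⟩ : ∃ c : ℕ, c + 1 = p := ⟨p - 1, Nat.succ_pred_eq_of_pos hp.pos⟩
  have hroot : ∀ i : ℕ, (η * ζ0 ^ i) ^ p = 1 := by
    intro i
    rw [mul_pow, hη, one_mul, ← pow_mul, mul_comm i p, pow_mul, h0, one_pow]
  have hne : ∀ i : ℕ, η * ζ0 ^ i ≠ 1 := by
    intro i hi
    apply hcon (c * i)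
    calc η = η * ζ0 ^ (p * i) := by rw [pow_mul, h0, one_pow, mul_one]
      _ = (η * ζ0 ^ i) * ζ0 ^ (c * i) := by
          rw [← hc1, add_mul, one_mul, pow_add]; ring
      _ = ζ0 ^ (c * i) := by rw [hi, one_mul]
  have hzero : ∑ i ∈ Finset.range p, ∑ j ∈ Finset.range p, (η * ζ0 ^ i) ^ j = 0 :=
    Finset.sum_eq_zero fun i _ =>
      stmt14_sum_eq_zero hp hu hconn (hroot i) (hne i)
  have hval : ∑ i ∈ Finset.range p, ∑ j ∈ Finset.range p, (η * ζ0 ^ i) ^ j = (p : A) := by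
    have hswap : ∑ i ∈ Finset.range p, ∑ j ∈ Finset.range p, (η * ζ0 ^ i) ^ j
        = ∑ j ∈ Finset.range p, η ^ j * ∑ i ∈ Finset.range p, (ζ0 ^ j) ^ i := by
      rw [Finset.sum_comm]
      refine Finset.sum_congr rfl fun j _ => ?_
      rw [Finset.mul_sum]
      refine Finset.sum_congr rfl fun i _ => ?_
      rw [mul_pow, ← pow_mul, mul_comm i j, pow_mul]
    rw [hswap]
    rw [Finset.sum_eq_single_of_mem 0 (Finset.mem_range.mpr hp.pos)]
    · simp only [pow_zero, one_pow, one_mul, Finset.sum_const, Finset.card_range,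
        nsmul_eq_mul, mul_one]
    · intro j hj hj0
      have hjp := Finset.mem_range.mp hj
      have hzj : (ζ0 ^ j) ^ p = 1 := by
        rw [← pow_mul, mul_comm j p, pow_mul, h0, one_pow]
      have hzj1 : ζ0 ^ j ≠ 1 := hne1 j (Nat.pos_of_ne_zero hj0) hjp
      rw [stmt14_sum_eq_zero hp hu hconn hzj hzj1, mul_zero]
  rw [hzero] at hval
  have : IsUnit (0 : A) := by rw [hval]; exact hu
  exact zero_ne_one (isUnit_zero_iff.mp this)

/-- If `g` has order `p ^ m`, every `p^m`-th root of unity is a power of `g`. -/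
lemma stmt14_gen (hp : p.Prime) (hu : IsUnit ((p : ℕ) : A))
    (hconn : ∀ e : A, IsIdempotentElem e → e = 0 ∨ e = 1) :
    ∀ (m : ℕ) (g ζ : A), orderOf g = p ^ m → ζ ^ p ^ m = 1 → ∃ j : ℕ, ζ = g ^ j := by
  intro m
  induction m with
  | zero =>
    intro g ζ _ hζ
    exact ⟨0, by rw [pow_zero, pow_one] at hζ; rw [hζ, pow_zero]⟩
  | succ m ih =>
    intro g ζ hg hζ
    have hgN1 : g ^ p ^ (m + 1) = 1 := by rw [← hg]; exact pow_orderOf_eq_one g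
    obtain ⟨N, hN⟩ : ∃ N : ℕ, N + 1 = p ^ (m + 1) :=
      ⟨p ^ (m + 1) - 1, Nat.succ_pred_eq_of_pos (pow_pos hp.pos _)⟩
    have hgN : g ^ (N + 1) = 1 := by rw [hN]; exact hgN1
    have hgp : orderOf (g ^ p) = p ^ m := by
      rw [orderOf_pow' g hp.pos.ne', hg]
      rw [Nat.gcd_eq_right (dvd_pow_self p (Nat.succ_ne_zero m))]
      rw [pow_succ, Nat.mul_div_cancel _ hp.pos]
    have hζp : (ζ ^ p) ^ p ^ m = 1 := by
      rw [← pow_mul, mul_comm p (p ^ m), ← pow_succ]; exact hζ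
    obtain ⟨j, hj⟩ := ih (g ^ p) (ζ ^ p) hgp hζp
    have hz0p : (g ^ p ^ m) ^ p = 1 := by rw [← pow_mul, ← pow_succ]; exact hgN1
    have hz0ne : g ^ p ^ m ≠ 1 := by
      intro h
      have hdvd := orderOf_dvd_of_pow_eq_one h
      rw [hg] at hdvd
      have h1 := Nat.le_of_dvd (pow_pos hp.pos m) hdvd
      have h2 : p ^ m < p ^ (m + 1) := Nat.pow_lt_pow_succ hp.one_lt
      omega
    have hw : (ζ * g ^ (N * j)) ^ p = 1 := by
      rw [mul_pow, hj, ← pow_mul, ← pow_mul, ← pow_add,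
        show p * j + N * j * p = (N + 1) * (j * p) by ring, pow_mul, hgN, one_pow]
    obtain ⟨i, hi⟩ := stmt14_root_mem_powers hp hu hconn hz0p hz0ne hw
    rw [← pow_mul] at hi
    refine ⟨p ^ m * i + j, ?_⟩
    calc ζ = ζ * (g ^ (N + 1)) ^ j := by rw [hgN, one_pow, mul_one]
      _ = (ζ * g ^ (N * j)) * g ^ j := by
          rw [← pow_mul, show (N + 1) * j = N * j + j by ring, pow_add]; ring
      _ = g ^ (p ^ m * i) * g ^ j := by rw [hi]
      _ = g ^ (p ^ m * i + j) := by rw [pow_add]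

/-- The set of `p`-th roots of unity in a connected ring with `p` invertible is finite. -/
lemma stmt14_fin_one (hp : p.Prime) (hu : IsUnit ((p : ℕ) : A))
    (hconn : ∀ e : A, IsIdempotentElem e → e = 0 ∨ e = 1) :
    {x : A | x ^ p = 1}.Finite := by
  by_cases h : ∃ z : A, z ^ p = 1 ∧ z ≠ 1
  · obtain ⟨z, hz, hz1⟩ := h
    apply Set.Finite.subset ((Set.finite_Iio p).image (fun j => z ^ j))
    intro x hx
    obtain ⟨j, rfl⟩ := stmt14_root_mem_powers hp hu hconn hz hz1 hx
    refine ⟨j % p, Nat.mod_lt j hp.pos, ?_⟩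
    conv_rhs => rw [← Nat.div_add_mod j p]
    rw [pow_add, pow_mul, hz, one_pow, one_mul]
  · push_neg at h
    apply Set.Finite.subset (Set.finite_singleton (1 : A))
    intro x hx
    exact h x hx

/-- The set of `p^a`-th roots of unity in a connected ring with `p` invertible is finite. -/
lemma stmt14_fin (hp : p.Prime) (hu : IsUnit ((p : ℕ) : A))
    (hconn : ∀ e : A, IsIdempotentElem e → e = 0 ∨ e = 1) :
    ∀ a : ℕ, {x : A | x ^ p ^ a = 1}.Finite := by
  intro a
  induction a with
  | zero =>
    apply Set.Finite.subset (Set.finite_singleton (1 : A))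
    intro x hx
    simp only [pow_zero, pow_one, Set.mem_setOf_eq] at hx
    exact hx
  | succ a ih =>
    have hT1 := stmt14_fin_one hp hu hconn
    have hsub : {x : A | x ^ p ^ (a + 1) = 1} ⊆
        ⋃ t ∈ {x : A | x ^ p ^ a = 1},
          {x : A | x ^ p ^ (a + 1) = 1 ∧ x ^ p = t} := by
      intro x hx
      have hx' : (x ^ p) ^ p ^ a = 1 := by
        rw [← pow_mul, mul_comm p (p ^ a), ← pow_succ]; exact hx
      exact Set.mem_biUnion hx' ⟨hx, rfl⟩
    refine Set.Finite.subset (Set.Finite.biUnion ih fun t _ => ?_) hsub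
    by_cases hne : {x : A | x ^ p ^ (a + 1) = 1 ∧ x ^ p = t}.Nonempty
    · obtain ⟨y, hy1, hy2⟩ := hne
      obtain ⟨M, hM⟩ : ∃ M : ℕ, M + 1 = p ^ (a + 1) :=
        ⟨p ^ (a + 1) - 1, Nat.succ_pred_eq_of_pos (pow_pos hp.pos _)⟩
      apply Set.Finite.subset (hT1.image (fun u => y * u))
      rintro x ⟨hx1, hx2⟩
      have hyM : y ^ (M + 1) = 1 := by rw [hM]; exact hy1
      refine ⟨x * y ^ M, ?_, ?_⟩
      · show (x * y ^ M) ^ p = 1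
        rw [mul_pow, hx2, ← hy2, ← pow_mul, ← pow_add,
          show p + M * p = (M + 1) * p by ring, pow_mul, hyM, one_pow]
      · show y * (x * y ^ M) = x
        calc y * (x * y ^ M) = x * y ^ (M + 1) := by rw [pow_add]; ring
          _ = x := by rw [hM, hy1, mul_one]
    · rw [Set.not_nonempty_iff_eq_empty] at hne
      rw [hne]
      exact Set.finite_empty

end Stmt14Aux

/-- Consequence of Corollary `cycliclemma` used in Proposition `Wconnprop`: if the
additive group of `R` is torsion-free and the localization `R[1/p]` is connected,
then for every `k ≥ 0` the set `{ζ ∈ R : ζ^{p^k} = 1}` is a finite cyclic group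
under multiplication whose order divides `p^k`. -/
theorem stmt_14 {R : Type*} [CommRing R] (htf : ∀ g : R, g ≠ 0 → ¬IsOfFinAddOrder g)
    (p : ℕ) (hp : p.Prime)
    (hnontriv : Nontrivial (Localization (Submonoid.powers (p : R))))
    (hconn : ∀ e : Localization (Submonoid.powers (p : R)),
      IsIdempotentElem e → e = 0 ∨ e = 1)
    (k : ℕ) :
    {ζ : R | ζ ^ p ^ k = 1}.Finite ∧
      (∃ g : R, g ^ p ^ k = 1 ∧ ∀ ζ : R, ζ ^ p ^ k = 1 → ∃ j : ℕ, ζ = g ^ j) ∧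
      {ζ : R | ζ ^ p ^ k = 1}.ncard ∣ p ^ k := by
  classical
  haveI := hnontriv
  set A' := Localization (Submonoid.powers (p : R)) with hA'
  let f : R →+* A' := algebraMap R A'
  -- injectivity of the localization map
  have hM : Submonoid.powers (p : R) ≤ nonZeroDivisors R := by
    rintro x ⟨n, rfl⟩
    rw [mem_nonZeroDivisors_iff_right]
    intro z hz
    by_contra hz0
    refine htf z hz0 (isOfFinAddOrder_iff_nsmul_eq_zero.mpr ⟨p ^ n, pow_pos hp.pos n, ?_⟩)
    rw [nsmul_eq_mul, Nat.cast_pow, mul_comm]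
    exact hz
  have hinj : Function.Injective f := IsLocalization.injective A' hM
  -- p is a unit in A'
  have hu : IsUnit ((p : ℕ) : A') := by
    have := IsLocalization.map_units A'
      (⟨(p : R), Submonoid.mem_powers _⟩ : Submonoid.powers (p : R))
    rwa [show ((⟨(p : R), Submonoid.mem_powers _⟩ : Submonoid.powers (p : R)) : R)
      = ((p : ℕ) : R) from rfl, map_natCast] at this
  -- the set in R is the preimage of the corresponding set in A'
  have hpre : {ζ : R | ζ ^ p ^ k = 1} = f ⁻¹' {x : A' | x ^ p ^ k = 1} := by
    ext ζ
    simp only [Set.mem_setOf_eq, Set.mem_preimage]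
    constructor
    · intro h; rw [← map_pow, h, map_one]
    · intro h; apply hinj; rw [map_pow, map_one]; exact h
  have hfin : {ζ : R | ζ ^ p ^ k = 1}.Finite := by
    rw [hpre]
    exact Set.Finite.preimage hinj.injOn (stmt14_fin hp hu hconn k)
  -- pick an element of maximal order
  have hone : (1 : R) ∈ hfin.toFinset := by
    rw [Set.Finite.mem_toFinset]; exact one_pow _
  obtain ⟨g, hgmem, hgmax⟩ := Finset.exists_max_image hfin.toFinset orderOf ⟨1, hone⟩
  rw [Set.Finite.mem_toFinset] at hgmem
  have hgpk : g ^ p ^ k = 1 := hgmem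
  have hgdvd : orderOf g ∣ p ^ k := orderOf_dvd_of_pow_eq_one hgpk
  obtain ⟨c, hck, hc⟩ := (Nat.dvd_prime_pow hp).mp hgdvd
  -- compute the order of f g
  have hford : orderOf (f g) = p ^ c :=
    (orderOf_injective f.toMonoidHom hinj g).trans hc
  have hgen : ∀ ζ : R, ζ ^ p ^ k = 1 → ∃ j : ℕ, ζ = g ^ j := by
    intro ζ hζ
    have hζdvd : orderOf ζ ∣ p ^ k := orderOf_dvd_of_pow_eq_one hζ
    obtain ⟨c', hc'k, hc'⟩ := (Nat.dvd_prime_pow hp).mp hζdvd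
    have hle : orderOf ζ ≤ orderOf g := by
      apply hgmax
      rw [Set.Finite.mem_toFinset]; exact hζ
    have hcc : c' ≤ c := by
      rw [hc, hc'] at hle
      exact (Nat.pow_le_pow_iff_right hp.one_lt).mp hle
    have hζc : ζ ^ p ^ c = 1 := by
      apply orderOf_dvd_iff_pow_eq_one.mp
      rw [hc']
      exact pow_dvd_pow p hcc
    have hfζ : (f ζ) ^ p ^ c = 1 := by rw [← map_pow, hζc, map_one]
    obtain ⟨j, hj⟩ := stmt14_gen hp hu hconn c (f g) (f ζ) hford hfζ
    refine ⟨j, hinj ?_⟩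
    rw [map_pow]; exact hj
  refine ⟨hfin, ⟨g, hgpk, hgen⟩, ?_⟩
  -- cardinality
  have hdpos : 0 < orderOf g := by rw [hc]; exact pow_pos hp.pos c
  have hset : {ζ : R | ζ ^ p ^ k = 1}
      = ↑((Finset.range (orderOf g)).image (fun j => g ^ j)) := by
    ext ζ
    simp only [Set.mem_setOf_eq, Finset.coe_image, Finset.coe_range, Set.mem_image,
      Set.mem_Iio]
    constructor
    · intro hζ
      obtain ⟨j, rfl⟩ := hgen ζ hζ
      exact ⟨j % orderOf g, Nat.mod_lt j hdpos, pow_mod_orderOf g j⟩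
    · rintro ⟨j, _, rfl⟩
      rw [← pow_mul, mul_comm j (p ^ k), pow_mul, hgpk, one_pow]
  rw [hset, Set.ncard_coe_finset, Finset.card_image_of_injOn, Finset.card_range]
  · exact hgdvd
  · rw [Finset.coe_range]
    exact pow_injOn_Iio_orderOf
end

section
/- Let R be a commutative ring and let I be a nilpotent ideal of R. For each non-negative integer i, let B_i be a subset of I^{2^i} such that B_i ∪ I^{2^{i+1}} generates I^{2^i} as an additive group. Then every element of the form 1 + b with b ∈ ⋃_i B_i is a unit of R, the set 1 + I = {1 + x : x ∈ I} is a subgroup of Rˣ, and 1 + I is generated as a group by the elements 1 + b with b ∈ ⋃_i B_i. -/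
/-!
`1 + I` is the kernel of `Rˣ → (R ⧸ I)ˣ`; each `1 + x` with `x ∈ I` is a unit as `I` is nil.
Let `C` be the subgroup generated by the `1 + b`. By descending induction on `i`, starting from an
`i` with `I ^ 2 ^ i = 0`, we get `1 + I ^ 2 ^ i ⊆ C`. In the inductive step, the `x ∈ I ^ 2 ^ i`
with `1 + x ∈ C` form an additive subgroup: `(1 + a) (1 + b) = 1 + (a + b) + a b` and
`(1 + a) (1 - a) = 1 - a²`, with the error terms `a b`, `a²` in `I ^ 2 ^ (i + 1)`, where the
induction hypothesis applies. This subgroup contains `B i ∪ I ^ 2 ^ (i + 1)`, hence all of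
`I ^ 2 ^ i`.
-/

section

variable {R : Type*} [CommRing R]

namespace Ideal

def unitsOneAdd (I : Ideal R) : Subgroup Rˣ :=
  (Units.map (Ideal.Quotient.mk I : R →* R ⧸ I)).ker

theorem mem_unitsOneAdd {I : Ideal R} {u : Rˣ} :
    u ∈ I.unitsOneAdd ↔ ∃ x ∈ I, (u : R) = 1 + x := by
  rw [unitsOneAdd, MonoidHom.mem_ker, Units.ext_iff, Units.coe_map, Units.val_one,
    MonoidHom.coe_coe, ← map_one (Ideal.Quotient.mk I), Ideal.Quotient.eq]
  exact ⟨fun h => ⟨_, h, by ring⟩, fun ⟨x, hx, hu⟩ => by rwa [hu, add_sub_cancel_left]⟩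

theorem isUnit_one_add_of_isNilpotent {I : Ideal R} (hI : IsNilpotent I) {x : R} (hx : x ∈ I) :
    IsUnit (1 + x) :=
  hI.isUnit_quotient_mk_iff.1 <| by
    rw [map_add, map_one, Ideal.Quotient.eq_zero_iff_mem.2 hx, add_zero]
    exact isUnit_one

end Ideal

namespace Subgroup

def ContainsOneAdd (C : Subgroup Rˣ) (s : Set R) : Prop :=
  ∀ x ∈ s, ∃ u ∈ C, (u : R) = 1 + x

variable {C : Subgroup Rˣ}

theorem containsOneAdd_bot : C.ContainsOneAdd (⊥ : Ideal R) := by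
  rintro x hx
  exact ⟨1, C.one_mem, by rw [(Submodule.mem_bot R).1 hx, Units.val_one, add_zero]⟩

theorem containsOneAdd_of_closure_eq {J K : Ideal R} {B : Set R}
    (hB : AddSubgroup.closure (B ∪ K) = J.toAddSubgroup) (hJK : J * J ≤ K)
    (hBC : C.ContainsOneAdd B) (hKC : C.ContainsOneAdd K) : C.ContainsOneAdd J := by
  have mem_J {y : R} (hy : y ∈ AddSubgroup.closure (B ∪ K)) : y ∈ J := by rwa [hB] at hy
  intro x hx
  replace hx : x ∈ AddSubgroup.closure (B ∪ K) := by rwa [hB]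
  induction hx using AddSubgroup.closure_induction with
  | mem y hy => exact hy.elim (hBC y) (hKC y)
  | zero => exact ⟨1, C.one_mem, by rw [Units.val_one, add_zero]⟩
  | add a b ha hb iha ihb =>
    obtain ⟨u, huC, hu⟩ := iha
    obtain ⟨v, hvC, hv⟩ := ihb
    obtain ⟨t, htC, ht⟩ := hKC (-(a * b) * ↑(u * v)⁻¹) <|
      K.mul_mem_right _ <| K.neg_mem <| hJK <| Ideal.mul_mem_mul (mem_J ha) (mem_J hb)
    refine ⟨u * v * t, mul_mem (mul_mem huC hvC) htC, ?_⟩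
    -- `(1 + a) (1 + b) (1 - a b ((1 + a) (1 + b))⁻¹) = 1 + (a + b)`
    calc ((u * v * t : Rˣ) : R) = ↑(u * v) - a * b * (↑(u * v) * ↑(u * v)⁻¹) := by
          rw [Units.val_mul _ t, ht]; ring
      _ = 1 + (a + b) := by rw [Units.mul_inv, Units.val_mul, hu, hv]; ring
  | neg a ha iha =>
    obtain ⟨u, huC, hu⟩ := iha
    obtain ⟨t, htC, ht⟩ :=
      hKC (-(a * a)) <| K.neg_mem <| hJK <| Ideal.mul_mem_mul (mem_J ha) (mem_J ha)
    refine ⟨u⁻¹ * t, mul_mem (inv_mem huC) htC, ?_⟩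
    calc ((u⁻¹ * t : Rˣ) : R) = ↑u⁻¹ * ↑u * (1 + -a) := by rw [Units.val_mul, ht, hu]; ring
      _ = 1 + -a := by rw [Units.inv_mul, one_mul]

theorem containsOneAdd_of_closure_eq_succ {J : ℕ → Ideal R} {B : ℕ → Set R} {n : ℕ}
    (hn : J n = ⊥) (hB : ∀ i, AddSubgroup.closure (B i ∪ J (i + 1)) = (J i).toAddSubgroup)
    (hJ : ∀ i, J i * J i ≤ J (i + 1)) (hBC : ∀ i, C.ContainsOneAdd (B i)) :
    C.ContainsOneAdd (J 0) := by
  refine Nat.decreasingInduction (motive := fun i _ => C.ContainsOneAdd (J i))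
    (fun i _ ih => containsOneAdd_of_closure_eq (hB i) (hJ i) (hBC i) ih) ?_ n.zero_le
  rw [hn]
  exact containsOneAdd_bot

end Subgroup

theorem Ideal.pow_two_pow_mul_self (I : Ideal R) (i : ℕ) :
    I ^ 2 ^ i * I ^ 2 ^ i = I ^ 2 ^ (i + 1) := by
  rw [← pow_add, pow_succ, mul_two]

end

theorem stmt_15_general {R : Type*} [CommRing R] (I : Ideal R) (hI : IsNilpotent I)
    (B : ℕ → Set R)
    (hBgen : ∀ i, AddSubgroup.closure (B i ∪ ((I ^ (2 ^ (i + 1)) : Ideal R) : Set R)) =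
      (I ^ (2 ^ i)).toAddSubgroup) :
    (∀ i, ∀ b ∈ B i, IsUnit (1 + b)) ∧
    (∀ x ∈ I, IsUnit (1 + x)) ∧
    {u : Rˣ | ∃ x ∈ I, (u : R) = 1 + x} =
      (Subgroup.closure {u : Rˣ | ∃ i, ∃ b ∈ B i, (u : R) = 1 + b} : Set Rˣ) := by
  have hBI (i : ℕ) : B i ⊆ I := fun b hb =>
    Ideal.pow_le_self (pow_ne_zero _ two_ne_zero) <| by
      rw [← Submodule.mem_toAddSubgroup, ← hBgen i]
      exact AddSubgroup.subset_closure (Or.inl hb)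
  have hunit (i : ℕ) (b : R) (hb : b ∈ B i) : IsUnit (1 + b) :=
    Ideal.isUnit_one_add_of_isNilpotent hI (hBI i hb)
  refine ⟨hunit, fun x => Ideal.isUnit_one_add_of_isNilpotent hI, ?_⟩
  set C := Subgroup.closure {u : Rˣ | ∃ i, ∃ b ∈ B i, (u : R) = 1 + b}
  have hIC : C.ContainsOneAdd I := by
    obtain ⟨n, hn⟩ := hI
    have hbot : I ^ 2 ^ n = ⊥ := pow_eq_zero_of_le (Nat.lt_two_pow_self).le hn
    have := Subgroup.containsOneAdd_of_closure_eq_succ (C := C) (J := fun i => I ^ 2 ^ i)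
      hbot hBgen (fun i => (I.pow_two_pow_mul_self i).le)
      fun i b hb => ⟨(hunit i b hb).unit, Subgroup.subset_closure ⟨i, b, hb, rfl⟩, rfl⟩
    rwa [pow_zero, pow_one] at this
  suffices I.unitsOneAdd = C by
    ext u
    rw [← this]
    exact Ideal.mem_unitsOneAdd.symm
  refine le_antisymm (fun u hu => ?_) ((Subgroup.closure_le _).2 ?_)
  · obtain ⟨x, hx, hux⟩ := Ideal.mem_unitsOneAdd.1 hu
    obtain ⟨v, hvC, hv⟩ := hIC x hx
    rwa [Units.ext (hux.trans hv.symm)]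
  · rintro u ⟨i, b, hb, hu⟩
    exact Ideal.mem_unitsOneAdd.2 ⟨b, hBI i hb, hu⟩

/-- Lemma `wecalledthisa`: let `I` be a nilpotent ideal of a commutative ring `R`,
and for each `i ≥ 0` let `B_i ⊆ I^{2^i}` be such that `B_i ∪ I^{2^{i+1}}` generates
`I^{2^i}` as an additive group. Then every `1 + b` with `b ∈ ⋃_i B_i` is a unit,
the set `1 + I` is a subgroup of `Rˣ`, and it is generated by the `1 + b`. -/
theorem stmt_15 {R : Type*} [CommRing R] (I : Ideal R) (hI : IsNilpotent I)
    (B : ℕ → Set R) (hBsub : ∀ i, B i ⊆ (I ^ (2 ^ i) : Ideal R))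
    (hBgen : ∀ i, AddSubgroup.closure (B i ∪ ((I ^ (2 ^ (i + 1)) : Ideal R) : Set R)) =
      (I ^ (2 ^ i)).toAddSubgroup) :
    (∀ i, ∀ b ∈ B i, IsUnit (1 + b)) ∧
    (∀ x ∈ I, IsUnit (1 + x)) ∧
    {u : Rˣ | ∃ x ∈ I, (u : R) = 1 + x} =
      (Subgroup.closure {u : Rˣ | ∃ i, ∃ b ∈ B i, (u : R) = 1 + b} : Set Rˣ) :=
  stmt_15_general I hI B hBgen
end

section
/- Let n be a positive integer and let A be the subring of ℤⁿ (with componentwise operations) consisting of all tuples (a_1, …, a_n) such that a_i ≡ a_j (mod 2) for all i, j. Then A is connected, i.e., its only idempotents are 0 = (0,…,0) and 1 = (1,…,1); moreover the unit group of A is exactly the set of tuples with every entry equal to 1 or −1, so that A has exactly 2ⁿ units, each of which is a root of unity. -/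
/-- The subring `A ⊆ ℤⁿ` of tuples all of whose entries are congruent mod `2`. -/
def congrSubring (n : ℕ) : Subring (Fin n → ℤ) where
  carrier := {a | ∀ i j : Fin n, a i ≡ a j [ZMOD 2]}
  add_mem' := fun ha hb i j => (ha i j).add (hb i j)
  mul_mem' := fun ha hb i j => (ha i j).mul (hb i j)
  neg_mem' := fun ha i j => (ha i j).neg
  zero_mem' := fun _ _ => Int.ModEq.refl 0
  one_mem' := fun _ _ => Int.ModEq.refl 1

/-!
The units of `ℤⁿ` are the tuples of signs `±1`; all of them are odd, so they already lie in
`A`, and hence `Aˣ = (ℤⁿ)ˣ ≅ (ℤˣ)ⁿ`, a finite group of order `2ⁿ`. An idempotent of `A` is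
an idempotent of `ℤⁿ`, i.e. a tuple of `0`s and `1`s, and the parity condition forbids mixing
the two values.
-/

namespace Subring

variable {R : Type*} [Ring R] (S : Subring R)

theorem isUnit_coe_iff_of_units_mem (hS : ∀ u : Rˣ, (u : R) ∈ S) {a : S} :
    IsUnit (a : R) ↔ IsUnit a := by
  refine ⟨fun ⟨u, hu⟩ => ⟨⟨a, ⟨_, hS u⁻¹⟩, ?_, ?_⟩, rfl⟩, IsUnit.map S.subtype⟩ <;>
    ext <;> simp [← hu]

noncomputable def unitsMulEquivOfUnitsMem (hS : ∀ u : Rˣ, (u : R) ∈ S) : Sˣ ≃* Rˣ :=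
  MulEquiv.ofBijective (Units.map S.subtype.toMonoidHom)
    ⟨Units.map_injective Subtype.val_injective, fun u =>
      ⟨((S.isUnit_coe_iff_of_units_mem hS (a := ⟨u, hS u⟩)).mp u.isUnit).unit, by ext; rfl⟩⟩

end Subring

namespace congrSubring

variable {n : ℕ}

theorem units_mem (u : (Fin n → ℤ)ˣ) : (u : Fin n → ℤ) ∈ congrSubring n := by
  intro i j
  have hu : ∀ k, IsUnit ((u : Fin n → ℤ) k) := Pi.isUnit_iff.mp u.isUnit
  rcases Int.isUnit_iff.mp (hu i) with hi | hi <;>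
    rcases Int.isUnit_iff.mp (hu j) with hj | hj <;> rw [hi, hj] <;> decide

theorem isUnit_iff {a : congrSubring n} :
    IsUnit a ↔ ∀ i, (a : Fin n → ℤ) i = 1 ∨ (a : Fin n → ℤ) i = -1 := by
  simp only [← (congrSubring n).isUnit_coe_iff_of_units_mem units_mem, Pi.isUnit_iff,
    Int.isUnit_iff]

theorem eq_zero_or_eq_one_of_isIdempotentElem {e : congrSubring n} (he : IsIdempotentElem e) :
    e = 0 ∨ e = 1 := by
  have hentry (i : Fin n) : (e : Fin n → ℤ) i = 0 ∨ (e : Fin n → ℤ) i = 1 :=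
    IsIdempotentElem.iff_eq_zero_or_one.mp (congrFun (congrArg Subtype.val he) i)
  by_cases hzero : ∀ i, (e : Fin n → ℤ) i = 0
  · exact .inl (Subtype.ext (funext hzero))
  obtain ⟨i, hi⟩ := not_forall.mp hzero
  have hi : (e : Fin n → ℤ) i = 1 := (hentry i).resolve_left hi
  refine .inr (Subtype.ext (funext fun j => (hentry j).resolve_left fun hj => ?_))
  have hparity := e.2 j i
  rw [hj, hi] at hparity
  exact absurd hparity (by decide)

noncomputable def unitsMulEquiv (n : ℕ) : (congrSubring n)ˣ ≃* (Fin n → ℤˣ) :=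
  ((congrSubring n).unitsMulEquivOfUnitsMem units_mem).trans MulEquiv.piUnits

theorem card_units (n : ℕ) : Nat.card (congrSubring n)ˣ = 2 ^ n := by
  rw [Nat.card_congr (unitsMulEquiv n).toEquiv, Nat.card_fun, Nat.card_eq_fintype_card,
    Fintype.card_units_int, Nat.card_fin]

instance : Finite (congrSubring n)ˣ := .of_equiv _ (unitsMulEquiv n).symm.toEquiv

end congrSubring

theorem stmt_19_general (n : ℕ) :
    (∀ e : congrSubring n, e * e = e → e = 0 ∨ e = 1) ∧
    (∀ a : congrSubring n, IsUnit a ↔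
      ∀ i : Fin n, (a : Fin n → ℤ) i = 1 ∨ (a : Fin n → ℤ) i = -1) ∧
    Nat.card (congrSubring n)ˣ = 2 ^ n ∧
    (∀ u : (congrSubring n)ˣ, IsOfFinOrder u) :=
  ⟨fun _ he => congrSubring.eq_zero_or_eq_one_of_isIdempotentElem he,
    fun _ => congrSubring.isUnit_iff, congrSubring.card_units n, fun _ => isOfFinOrder_of_finite _⟩

/-- The example of section 2: for `n ≥ 1`, the order
`A = {(a₁,…,aₙ) ∈ ℤⁿ : aᵢ ≡ aⱼ mod 2}` is connected (its only idempotents are `0`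
and `1`), its unit group is exactly the set of tuples with entries `±1`, so it has
exactly `2ⁿ` units, and every unit is a root of unity. -/
theorem stmt_19 (n : ℕ) (hn : 0 < n) :
    (∀ e : congrSubring n, e * e = e → e = 0 ∨ e = 1) ∧
    (∀ a : congrSubring n, IsUnit a ↔
      ∀ i : Fin n, (a : Fin n → ℤ) i = 1 ∨ (a : Fin n → ℤ) i = -1) ∧
    Nat.card (congrSubring n)ˣ = 2 ^ n ∧
    (∀ u : (congrSubring n)ˣ, IsOfFinOrder u) :=
  stmt_19_general n
end
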